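/- arXiv:2308.02232 — 6 statements merged into one kernel-verified Lean document; each statement's English description precedes it below -/
import Mathlib

section
/- Let q > 1 and m > −1 be real and k ≥ 0 an integer. Then there exist real numbers a_0, …, a_k with a_k ≠ 0, satisfying (with the convention a_{k+1} = a_{k+2} = 0) the recurrence (q^{−i} − q^{−k})a_i − (1 + q^{−m})(q^{−1−i} − 1)a_{i+1} + (q^{−2−i−m} − q^{−m} + q^{i+1−m} − q^{−1−m})a_{i+2} = 0 for all 0 ≤ i ≤ k, such that the nonzero sequence ν defined by ν(l) := π_m(l)·Σ_{i=0}^{k} a_i q^{il} satisfies ν(l−1)P_m(l−1,l) + ν(l)P_m(l,l) + ν(l+1)P_m(l+1,l) = q^{−k}·ν(l) for all l ≥ 0 (the l−1 term being omitted when l = 0); that is, ν is an eigenvector of P_m with eigenvalue q^{−k}. -/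
noncomputable section

/-- The tridiagonal transition matrix `P_m` for real `q > 1`, `m > -1`. -/
def Pm (q m : ℝ) (i j : ℕ) : ℝ :=
  if j = i + 1 then q ^ (-1 - 2 * (i : ℝ) - m)
  else if j = i then
    1 - (1 - q ^ (-(i : ℝ))) * (1 - q ^ (-m - (i : ℝ))) - q ^ (-1 - 2 * (i : ℝ) - m)
  else if i = j + 1 then (1 - q ^ (-(i : ℝ))) * (1 - q ^ (-m - (i : ℝ)))
  else 0

/-- Unnormalized weight `q^{-i(i+m)} / (η_i(q)·∏_{j=1}^{i}(1-q^{-m-j}))`. -/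
def piWt (q m : ℝ) (i : ℕ) : ℝ :=
  q ^ (-((i : ℝ) * ((i : ℝ) + m))) /
    ((∏ j ∈ Finset.range i, (1 - q ^ (-((j : ℝ) + 1)))) *
      ∏ j ∈ Finset.range i, (1 - q ^ (-m - ((j : ℝ) + 1))))

/-- The stationary distribution `π_m`, normalized so that it sums to `1`. -/
def piM (q m : ℝ) (i : ℕ) : ℝ := (∑' k : ℕ, piWt q m k)⁻¹ * piWt q m i

/-! Since `P_m` is reversible with respect to `π_m`, the sequence `ν = π_m · f` is a left
eigenvector of `P_m` as soon as `f` is a right eigenvector. In the variable `x = q^l` the operator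
`f ↦ P_m f` is a `q`-difference operator sending `x^i` to a combination of `x^i, x^(i-1), x^(i-2)`,
so `F = ∑ a_i x^i` is an eigenfunction with eigenvalue `q^{-k}` exactly when the `a_i` satisfy the
three-term recurrence; its leading coefficient `q^{-i} - q^{-k}` vanishes only at `i = k`, so the
recurrence can be solved downwards from `a_k = 1`. Finally `ν ≠ 0` because `π_m > 0` (the ratio
test gives summability of the weights) and the nonzero polynomial `F` cannot vanish at all the
distinct points `q^l`. -/

open Finset Filter Topology

theorem exists_three_term_backward_solution {K : Type*} [Field K] (α β γ : ℕ → K) (k : ℕ)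
    (hα : ∀ i < k, α i ≠ 0) :
    ∃ a : ℕ → K, a k = 1 ∧ (∀ i, k < i → a i = 0) ∧
      ∀ i < k, α i * a i + β i * a (i + 1) + γ i * a (i + 2) = 0 := by
  induction k generalizing α β γ with
  | zero => exact ⟨fun i => if i = 0 then 1 else 0, by simp, fun i hi => by simp [hi.ne'], by simp⟩
  | succ k ih =>
    obtain ⟨b, hbk, hbgt, hbrec⟩ :=
      ih (α ∘ Nat.succ) (β ∘ Nat.succ) (γ ∘ Nat.succ) fun i hi => hα _ (by omega)
    refine ⟨fun | 0 => -(β 0 * b 0 + γ 0 * b 1) / α 0 | i + 1 => b i, hbk, ?_, ?_⟩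
    · rintro (_ | i) hi
      · omega
      · exact hbgt i (by omega)
    · rintro (_ | i) hi
      · field_simp [hα 0 hi]
        ring
      · exact hbrec i (by omega)

theorem sum_mul_three_term_eq_zero {R : Type*} [CommRing R] (a c₀ c₁ c₂ : ℕ → R) (x : R)
    (k : ℕ) (ha₁ : a (k + 1) = 0) (ha₂ : a (k + 2) = 0) (hc₁ : c₁ 0 = 0) (hc₂ : c₂ 0 = 0)
    (hc₂' : c₂ 1 = 0)
    (hrec : ∀ i ≤ k, c₀ i * a i + c₁ (i + 1) * a (i + 1) + c₂ (i + 2) * a (i + 2) = 0) :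
    ∑ i ∈ range (k + 1), a i * (c₀ i * x ^ (i + 2) + c₁ i * x ^ (i + 1) + c₂ i * x ^ i) = 0 := by
  have h₀ : ∑ i ∈ range (k + 3), a i * c₀ i * x ^ (i + 2)
      = ∑ i ∈ range (k + 1), c₀ i * a i * x ^ (i + 2) := by
    simp only [sum_range_succ _ (k + 2), sum_range_succ _ (k + 1), ha₁, ha₂]
    simp only [zero_mul, add_zero, mul_comm (a _)]
  have h₁ : ∑ i ∈ range (k + 3), a i * c₁ i * x ^ (i + 1)
      = ∑ i ∈ range (k + 1), c₁ (i + 1) * a (i + 1) * x ^ (i + 2) := by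
    simp only [sum_range_succ' _ (k + 2), sum_range_succ _ (k + 1), hc₁, ha₂]
    simp only [zero_mul, add_zero, mul_comm (a _)]
  have h₂ : ∑ i ∈ range (k + 3), a i * c₂ i * x ^ i
      = ∑ i ∈ range (k + 1), c₂ (i + 2) * a (i + 2) * x ^ (i + 2) := by
    simp only [sum_range_succ' _ (k + 2), sum_range_succ' _ (k + 1), hc₂, hc₂']
    simp only [zero_mul, add_zero, mul_comm (a _)]
  calc ∑ i ∈ range (k + 1), a i * (c₀ i * x ^ (i + 2) + c₁ i * x ^ (i + 1) + c₂ i * x ^ i)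
      = ∑ i ∈ range (k + 3), a i * (c₀ i * x ^ (i + 2) + c₁ i * x ^ (i + 1) + c₂ i * x ^ i) := by
        simp [sum_range_succ _ (k + 2), sum_range_succ _ (k + 1), ha₁, ha₂]
    _ = ∑ i ∈ range (k + 1),
          (c₀ i * a i + c₁ (i + 1) * a (i + 1) + c₂ (i + 2) * a (i + 2)) * x ^ (i + 2) := by
        simp only [mul_add, sum_add_distrib, ← mul_assoc, h₀, h₁, h₂, add_mul]
    _ = 0 := sum_eq_zero fun i hi => by rw [hrec i (mem_range_succ_iff.mp hi), zero_mul]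

def powSum {R : Type*} [CommRing R] (a : ℕ → R) (k : ℕ) (x : R) : R :=
  ∑ i ∈ range (k + 1), a i * x ^ i

theorem exists_powSum_ne_zero_of_injective {R : Type*} [CommRing R] [IsDomain R] {a : ℕ → R}
    {k : ℕ} (hak : a k ≠ 0) {x : ℕ → R} (hx : Function.Injective x) :
    ∃ l, powSum a k (x l) ≠ 0 := by
  set p : Polynomial R := ∑ i ∈ range (k + 1), Polynomial.C (a i) * Polynomial.X ^ i
  have hp : p ≠ 0 := fun h => hak <| by
    simpa [p, Polynomial.finsetSum_coeff, Polynomial.coeff_C_mul_X_pow] using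
      congrArg (Polynomial.coeff · k) h
  by_contra! h
  refine hp (p.eq_zero_of_infinite_isRoot ((Set.infinite_range_of_injective hx).mono ?_))
  rintro _ ⟨l, rfl⟩
  simpa [p, powSum, Polynomial.eval_finsetSum] using h l

theorem tridiagonal_left_eigen_of_right_eigen {R : Type*} [CommRing R] {P : ℕ → ℕ → R}
    {π f : ℕ → R} {ρ : R} (hbal : ∀ n, π n * P n (n + 1) = π (n + 1) * P (n + 1) n)
    (hf : ∀ l, (if l = 0 then 0 else P l (l - 1) * f (l - 1)) + P l l * f l
      + P l (l + 1) * f (l + 1) = ρ * f l) (l : ℕ) :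
    (if l = 0 then 0 else π (l - 1) * f (l - 1) * P (l - 1) l) + π l * f l * P l l
      + π (l + 1) * f (l + 1) * P (l + 1) l = ρ * (π l * f l) := by
  cases l with
  | zero =>
    have h₀ := hf 0
    simp only [if_pos] at h₀ ⊢
    linear_combination π 0 * h₀ - f 1 * hbal 0
  | succ n =>
    have h₁ := hf (n + 1)
    simp only [Nat.add_sub_cancel, if_neg n.succ_ne_zero] at h₁ ⊢
    linear_combination π (n + 1) * h₁ + f n * hbal n - f (n + 2) * hbal (n + 1)

section QDifference

variable {K : Type*} [Field K]

-- At `μ = q^(-m)` and `x = q^l` these are the rates `P_m(l, l-1)` and `P_m(l, l+1)`.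
def downRate (μ x : K) : K := (1 - x⁻¹) * (1 - μ * x⁻¹)

def upRate (q μ x : K) : K := μ * q⁻¹ * (x ^ 2)⁻¹

def recCoeff₀ (q ρ : K) (i : ℕ) : K := (q ^ i)⁻¹ - ρ

def recCoeff₁ (q μ : K) (i : ℕ) : K := -((1 + μ) * ((q ^ i)⁻¹ - 1))

def recCoeff₂ (q μ : K) (i : ℕ) : K := μ * ((q ^ i)⁻¹ - 1 + q⁻¹ * (q ^ i - 1))

theorem sq_mul_qDifference_pow {q x : K} (μ ρ : K) (hq : q ≠ 0) (hx : x ≠ 0) (i : ℕ) :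
    x ^ 2 * (downRate μ x * (x / q) ^ i + (1 - downRate μ x - upRate q μ x) * x ^ i
        + upRate q μ x * (q * x) ^ i - ρ * x ^ i)
      = recCoeff₀ q ρ i * x ^ (i + 2) + recCoeff₁ q μ i * x ^ (i + 1)
        + recCoeff₂ q μ i * x ^ i := by
  simp only [downRate, upRate, recCoeff₀, recCoeff₁, recCoeff₂, div_pow, mul_pow]
  field_simp
  ring

theorem qDifference_powSum {q x : K} (μ ρ : K) (hq : q ≠ 0) (hx : x ≠ 0) {a : ℕ → K} {k : ℕ}
    (ha₁ : a (k + 1) = 0) (ha₂ : a (k + 2) = 0)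
    (hrec : ∀ i ≤ k, recCoeff₀ q ρ i * a i + recCoeff₁ q μ (i + 1) * a (i + 1)
      + recCoeff₂ q μ (i + 2) * a (i + 2) = 0) :
    downRate μ x * powSum a k (x / q) + (1 - downRate μ x - upRate q μ x) * powSum a k x
      + upRate q μ x * powSum a k (q * x) = ρ * powSum a k x := by
  have hc₂ : recCoeff₂ q μ 1 = 0 := by
    simp only [recCoeff₂, pow_one]
    field_simp
    ring
  rw [← sub_eq_zero, ← mul_right_inj' (pow_ne_zero 2 hx), mul_zero,
    ← sum_mul_three_term_eq_zero a _ _ _ x k ha₁ ha₂ (by simp [recCoeff₁]) (by simp [recCoeff₂])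
      hc₂ hrec]
  simp only [powSum, mul_sum, ← sum_sub_distrib, ← sum_add_distrib]
  refine sum_congr rfl fun i _ => ?_
  linear_combination a i * sq_mul_qDifference_pow μ ρ hq hx i

end QDifference

section TransitionMatrix

variable {q m : ℝ}

theorem Pm_succ_left (hq : 0 < q) (n : ℕ) :
    Pm q m (n + 1) n = downRate (q ^ (-m)) (q ^ (n + 1)) := by
  rw [Pm, if_neg (by omega), if_neg (by omega), if_pos rfl, downRate,
    Real.rpow_sub_natCast hq.ne', Real.rpow_neg hq.le, Real.rpow_natCast, div_eq_mul_inv]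

theorem upRate_eq_rpow (hq : 0 < q) (n : ℕ) :
    upRate q (q ^ (-m)) (q ^ n) = q ^ (-1 - 2 * (n : ℝ) - m) := by
  rw [show -1 - 2 * (n : ℝ) - m = -m - ((2 * n + 1 : ℕ) : ℝ) by push_cast; ring,
    Real.rpow_sub_natCast hq.ne', upRate]
  ring

theorem Pm_succ_right (hq : 0 < q) (n : ℕ) :
    Pm q m n (n + 1) = upRate q (q ^ (-m)) (q ^ n) := by
  rw [Pm, if_pos rfl, upRate_eq_rpow hq]

theorem Pm_self (hq : 0 < q) (n : ℕ) :
    Pm q m n n = 1 - downRate (q ^ (-m)) (q ^ n) - upRate q (q ^ (-m)) (q ^ n) := by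
  rw [Pm, if_neg (by omega), if_pos rfl, upRate_eq_rpow hq, downRate,
    Real.rpow_sub_natCast hq.ne', Real.rpow_neg hq.le, Real.rpow_natCast, div_eq_mul_inv]

theorem piWt_eq (hq : 0 < q) (n : ℕ) :
    piWt q m n = (q ^ (n * n))⁻¹ * (q ^ (-m)) ^ n
      / ∏ j ∈ range n, downRate (q ^ (-m)) (q ^ (j + 1)) := by
  have hnum : q ^ (-((n : ℝ) * ((n : ℝ) + m))) = (q ^ (n * n))⁻¹ * (q ^ (-m)) ^ n := by
    rw [show -((n : ℝ) * ((n : ℝ) + m)) = -m * n - ((n * n : ℕ) : ℝ) by push_cast; ring,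
      Real.rpow_sub_natCast hq.ne', Real.rpow_mul_natCast hq.le]
    ring
  rw [piWt, hnum, ← prod_mul_distrib]
  congr 2 with j
  rw [downRate, ← Nat.cast_succ, Real.rpow_sub_natCast hq.ne', Real.rpow_neg hq.le,
    Real.rpow_natCast, div_eq_mul_inv]

theorem downRate_pos {μ x : ℝ} (hx : 1 < x) (hμ : μ < x) : 0 < downRate μ x :=
  mul_pos (sub_pos.2 (inv_lt_one_of_one_lt₀ hx))
    (sub_pos.2 ((mul_inv_lt_iff₀ (one_pos.trans hx)).2 (by linarith)))

theorem downRate_rpow_pos (hq : 1 < q) (hm : -1 < m) (n : ℕ) :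
    0 < downRate (q ^ (-m)) (q ^ (n + 1)) := by
  refine downRate_pos (one_lt_pow₀ hq n.succ_ne_zero) ((?_ : q ^ (-m) < q).trans_le
    (le_self_pow₀ hq.le n.succ_ne_zero))
  simpa using Real.rpow_lt_rpow_of_exponent_lt hq (by linarith : -m < 1)

theorem piWt_pos (hq : 1 < q) (hm : -1 < m) (n : ℕ) : 0 < piWt q m n := by
  have hq₀ : 0 < q := one_pos.trans hq
  rw [piWt_eq hq₀]
  exact div_pos (by positivity) (prod_pos fun j _ => downRate_rpow_pos hq hm j)

theorem piWt_mul_Pm_succ_right (hq : 1 < q) (hm : -1 < m) (n : ℕ) :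
    piWt q m n * Pm q m n (n + 1) = piWt q m (n + 1) * Pm q m (n + 1) n := by
  have hq₀ : 0 < q := one_pos.trans hq
  have hdown := (downRate_rpow_pos hq hm n).ne'
  have hprod := (prod_pos fun j (_ : j ∈ range n) => downRate_rpow_pos hq hm j).ne'
  rw [Pm_succ_right hq₀, Pm_succ_left hq₀, piWt_eq hq₀, piWt_eq hq₀, prod_range_succ, upRate]
  field_simp
  ring

theorem summable_piWt (hq : 1 < q) (hm : -1 < m) : Summable (piWt q m) := by
  have hq₀ : 0 < q := one_pos.trans hq
  set μ := q ^ (-m)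
  have hinv : Tendsto (fun n : ℕ => (q ^ n)⁻¹) atTop (𝓝 0) :=
    tendsto_inv_atTop_zero.comp (tendsto_pow_atTop_atTop_of_one_lt hq)
  have hup : Tendsto (fun n : ℕ => upRate q μ (q ^ n)) atTop (𝓝 0) := by
    simpa [upRate, inv_pow] using (hinv.pow 2).const_mul (μ * q⁻¹)
  have hdown : Tendsto (fun n : ℕ => downRate μ (q ^ (n + 1))) atTop (𝓝 1) := by
    have h := (tendsto_add_atTop_iff_nat 1).2 hinv
    simpa [downRate] using ((tendsto_const_nhds (x := (1 : ℝ))).sub h).mul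
      ((tendsto_const_nhds (x := (1 : ℝ))).sub (h.const_mul μ))
  refine summable_of_ratio_test_tendsto_lt_one zero_lt_one
    (.of_forall fun n => (piWt_pos hq hm n).ne') ?_
  refine (zero_div (1 : ℝ) ▸ hup.div hdown one_ne_zero).congr fun n => ?_
  have h := piWt_mul_Pm_succ_right hq hm n
  rw [Pm_succ_right hq₀, Pm_succ_left hq₀] at h
  rw [Pi.div_apply, Real.norm_of_nonneg (piWt_pos hq hm _).le,
    Real.norm_of_nonneg (piWt_pos hq hm _).le, div_eq_div_iff (downRate_rpow_pos hq hm n).ne' (piWt_pos hq hm n).ne']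
  linear_combination h

theorem piM_pos (hq : 1 < q) (hm : -1 < m) (n : ℕ) : 0 < piM q m n :=
  mul_pos (inv_pos.2 ((summable_piWt hq hm).tsum_pos (fun j => (piWt_pos hq hm j).le) 0
    (piWt_pos hq hm 0))) (piWt_pos hq hm n)

theorem piM_mul_Pm_succ_right (hq : 1 < q) (hm : -1 < m) (n : ℕ) :
    piM q m n * Pm q m n (n + 1) = piM q m (n + 1) * Pm q m (n + 1) n := by
  rw [piM, piM, mul_assoc, mul_assoc, piWt_mul_Pm_succ_right hq hm]

theorem Pm_right_eigen (hq : 1 < q) {a : ℕ → ℝ} {k : ℕ} {ρ : ℝ} (ha₁ : a (k + 1) = 0)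
    (ha₂ : a (k + 2) = 0)
    (hrec : ∀ i ≤ k, recCoeff₀ q ρ i * a i + recCoeff₁ q (q ^ (-m)) (i + 1) * a (i + 1)
      + recCoeff₂ q (q ^ (-m)) (i + 2) * a (i + 2) = 0) (l : ℕ) :
    (if l = 0 then 0 else Pm q m l (l - 1) * powSum a k (q ^ (l - 1)))
      + Pm q m l l * powSum a k (q ^ l) + Pm q m l (l + 1) * powSum a k (q ^ (l + 1))
      = ρ * powSum a k (q ^ l) := by
  have hq₀ : 0 < q := one_pos.trans hq
  have h := qDifference_powSum (q ^ (-m)) ρ hq₀.ne' (pow_ne_zero l hq₀.ne') ha₁ ha₂ hrec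
  rw [Pm_self hq₀, Pm_succ_right hq₀, pow_succ]
  rw [mul_comm q] at h
  cases l with
  | zero => simpa [downRate] using h
  | succ n =>
    rw [pow_succ q n, mul_div_cancel_right₀ _ hq₀.ne', ← pow_succ] at h
    rwa [if_neg n.succ_ne_zero, Nat.add_sub_cancel, Pm_succ_left hq₀]

theorem rpow_recurrence_eq_recCoeff (hq : 0 < q) (ρ : ℝ) (i : ℕ) (x y z : ℝ) :
    (q ^ (-(i : ℝ)) - ρ) * x - (1 + q ^ (-m)) * (q ^ (-1 - (i : ℝ)) - 1) * y
      + (q ^ (-2 - (i : ℝ) - m) - q ^ (-m) + q ^ ((i : ℝ) + 1 - m) - q ^ (-1 - m)) * z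
      = recCoeff₀ q ρ i * x + recCoeff₁ q (q ^ (-m)) (i + 1) * y
        + recCoeff₂ q (q ^ (-m)) (i + 2) * z := by
  have e₁ : q ^ (-1 - (i : ℝ)) = (q ^ (i + 1))⁻¹ := by
    rw [show -1 - (i : ℝ) = -((i + 1 : ℕ) : ℝ) by push_cast; ring, Real.rpow_neg hq.le,
      Real.rpow_natCast]
  have e₂ : q ^ (-2 - (i : ℝ) - m) = q ^ (-m) / q ^ (i + 2) := by
    rw [show -2 - (i : ℝ) - m = -m - ((i + 2 : ℕ) : ℝ) by push_cast; ring,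
      Real.rpow_sub_natCast hq.ne']
  have e₃ : q ^ ((i : ℝ) + 1 - m) = q ^ (-m) * q ^ (i + 1) := by
    rw [show (i : ℝ) + 1 - m = -m + ((i + 1 : ℕ) : ℝ) by push_cast; ring,
      Real.rpow_add_natCast hq.ne']
  have e₄ : q ^ (-1 - m) = q ^ (-m) / q := by
    rw [show -1 - m = -m - ((1 : ℕ) : ℝ) by push_cast; ring, Real.rpow_sub_natCast hq.ne', pow_one]
  rw [e₁, e₂, e₃, e₄, Real.rpow_neg hq.le, Real.rpow_natCast, recCoeff₀, recCoeff₁, recCoeff₂]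
  field_simp
  ring

theorem exists_recCoeff_solution (hq : 1 < q) (μ : ℝ) (k : ℕ) :
    ∃ a : ℕ → ℝ, a k = 1 ∧ (∀ i, k < i → a i = 0) ∧
      ∀ i ≤ k, recCoeff₀ q (q ^ k)⁻¹ i * a i + recCoeff₁ q μ (i + 1) * a (i + 1)
        + recCoeff₂ q μ (i + 2) * a (i + 2) = 0 := by
  obtain ⟨a, hak, hgt, hrec⟩ := exists_three_term_backward_solution (recCoeff₀ q (q ^ k)⁻¹)
    (fun i => recCoeff₁ q μ (i + 1)) (fun i => recCoeff₂ q μ (i + 2)) k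
    fun i hi => sub_ne_zero.2 (inv_injective.ne (pow_lt_pow_right₀ hq hi).ne)
  refine ⟨a, hak, hgt, fun i hi => hi.lt_or_eq.elim (hrec i) ?_⟩
  rintro rfl
  simp [recCoeff₀, hgt (i + 1) (by omega), hgt (i + 2) (by omega)]

theorem sum_rpow_eq_powSum (hq : 0 ≤ q) (a : ℕ → ℝ) (k l : ℕ) :
    ∑ i ∈ range (k + 1), a i * q ^ ((i : ℝ) * (l : ℝ)) = powSum a k (q ^ l) := by
  refine sum_congr rfl fun i _ => ?_
  rw [mul_comm (i : ℝ), Real.rpow_natCast_mul hq, Real.rpow_natCast]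

end TransitionMatrix

/-- For each `k ≥ 0` there are coefficients `a_0, …, a_k` (with the convention
`a_{k+1} = a_{k+2} = 0`) with `a_k ≠ 0`, satisfying the stated recurrence, such that the nonzero
sequence `ν(l) = π_m(l)·Σ_{i=0}^{k} a_i q^{il}` is an eigenvector of `P_m` with eigenvalue
`q^{-k}`. -/
theorem stmt5 (q m : ℝ) (hq : 1 < q) (hm : -1 < m) (k : ℕ) :
    ∃ (a : ℕ → ℝ) (ν : ℕ → ℝ),
      a k ≠ 0 ∧ a (k + 1) = 0 ∧ a (k + 2) = 0 ∧
      (∀ i : ℕ, i ≤ k →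
        (q ^ (-(i : ℝ)) - q ^ (-(k : ℝ))) * a i
          - (1 + q ^ (-m)) * (q ^ (-1 - (i : ℝ)) - 1) * a (i + 1)
          + (q ^ (-2 - (i : ℝ) - m) - q ^ (-m) + q ^ ((i : ℝ) + 1 - m) - q ^ (-1 - m))
              * a (i + 2) = 0) ∧
      (∀ l : ℕ, ν l = piM q m l * ∑ i ∈ Finset.range (k + 1), a i * q ^ ((i : ℝ) * (l : ℝ))) ∧
      ν ≠ 0 ∧
      (∀ l : ℕ,
        (if l = 0 then 0 else ν (l - 1) * Pm q m (l - 1) l)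
          + ν l * Pm q m l l + ν (l + 1) * Pm q m (l + 1) l
        = q ^ (-(k : ℝ)) * ν l) := by
  have hq₀ : 0 < q := one_pos.trans hq
  rw [Real.rpow_neg hq₀.le, Real.rpow_natCast]
  obtain ⟨a, hak, hgt, hrec⟩ := exists_recCoeff_solution hq (q ^ (-m)) k
  have ha₁ := hgt (k + 1) (by omega)
  have ha₂ := hgt (k + 2) (by omega)
  refine ⟨a, fun l => piM q m l * powSum a k (q ^ l), by simp [hak], ha₁, ha₂,
    fun i hi => (rpow_recurrence_eq_recCoeff hq₀ _ i _ _ _).trans (hrec i hi),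
    fun l => by rw [sum_rpow_eq_powSum hq₀.le], fun hν => ?_,
    tridiagonal_left_eigen_of_right_eigen (f := fun l => powSum a k (q ^ l))
      (piM_mul_Pm_succ_right hq hm)
      (Pm_right_eigen hq ha₁ ha₂ hrec)⟩
  obtain ⟨l, hl⟩ := exists_powSum_ne_zero_of_injective (hak ▸ one_ne_zero)
    (pow_right_injective₀ hq₀ hq.ne')
  exact mul_ne_zero (piM_pos hq hm l).ne' hl (congrFun hν l)
end
end

section
/- Let q > 1 and m > −1 be real numbers. Suppose (μ_i)_{i≥0} is a sequence of complex numbers with Σ_{i=0}^{∞} |μ_i|² q^{i² + mi} < ∞ (which forces the power series f(z) = Σ_{i=0}^{∞} μ_i z^i to converge absolutely for every z ∈ ℂ). If f(q^k) = 0 for every integer k ≥ 0, then μ_i = 0 for all i. -/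
/-!
The hypothesis gives `‖μ i‖ ≤ C q^{-(i²+mi)/2}`. The polynomial `P_K(z) = ∏_{j<K} (1 - z/q^{j+1})`
is a combination of monomials `z^k`, so `∑ μ_i P_K(q^i) = 0`. It kills the terms `1 ≤ i ≤ K`,
hence `μ_0 P_K(1)` is minus the tail `∑_{i>K} μ_i P_K(q^i)`, which is `O(r^K)` with
`r = q^{-(m+1)/2} < 1`. As `P_K(1) = ∏_{j<K} (1 - q^{-j-1})` stays away from `0`, `μ_0 = 0`.
Shifting `μ` by `n` turns `m` into `m + 2n`, so induction kills every coefficient.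
-/

open Finset Filter Topology Polynomial Real

lemma exp_neg_div_le_one_sub {x a : ℝ} (hx : 0 ≤ x) (hxa : x ≤ a) (ha : a < 1) :
    exp (-(x / (1 - a))) ≤ 1 - x := by
  have h1x : 0 < 1 - x := by linarith
  calc exp (-(x / (1 - a))) ≤ exp (1 - (1 - x)⁻¹) := by
        have : 1 - (1 - x)⁻¹ = -(x / (1 - x)) := by field_simp; ring
        rw [this, exp_le_exp, neg_le_neg_iff]
        exact div_le_div_of_nonneg_left hx (by linarith) (by linarith)
    _ ≤ exp (log (1 - x)) := exp_le_exp.2 (one_sub_inv_le_log_of_pos h1x)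
    _ = 1 - x := exp_log h1x

lemma exp_neg_tsum_div_le_prod_one_sub {ι : Type*} {x : ι → ℝ} {a : ℝ} (hx : Summable x)
    (hx0 : ∀ j, 0 ≤ x j) (hxa : ∀ j, x j ≤ a) (ha : a < 1) (s : Finset ι) :
    exp (-((∑' j, x j) / (1 - a))) ≤ ∏ j ∈ s, (1 - x j) :=
  calc exp (-((∑' j, x j) / (1 - a))) ≤ exp (∑ j ∈ s, -(x j / (1 - a))) := by
        rw [exp_le_exp, sum_neg_distrib, ← sum_div, neg_le_neg_iff]
        exact div_le_div_of_nonneg_right (hx.sum_le_tsum s fun j _ => hx0 j) (by linarith)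
    _ = ∏ j ∈ s, exp (-(x j / (1 - a))) := exp_sum s _
    _ ≤ _ := prod_le_prod (fun j _ => (exp_pos _).le) fun j _ =>
        exp_neg_div_le_one_sub (hx0 j) (hxa j) ha

lemma hasSum_mul_eval_pow {R : Type*} [CommSemiring R] [TopologicalSpace R]
    [IsTopologicalSemiring R] {μ : ℕ → R} {w : R}
    (hf : ∀ k : ℕ, HasSum (fun i => μ i * (w ^ k) ^ i) 0) (p : R[X]) :
    HasSum (fun i => μ i * p.eval (w ^ i)) 0 := by
  have hterm : ∀ i, μ i * p.eval (w ^ i)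
      = ∑ k ∈ range (p.natDegree + 1), p.coeff k * (μ i * (w ^ k) ^ i) := fun i => by
    rw [eval_eq_sum_range, mul_sum]
    refine sum_congr rfl fun k _ => ?_
    rw [← pow_mul, ← pow_mul, mul_comm i k]; ring
  simpa [hterm] using hasSum_sum fun k _ => (hf k).mul_left (p.coeff k)

lemma hasSum_mul_pow_nat_add {K : Type*} [Field K] [TopologicalSpace K] [IsTopologicalRing K]
    {μ : ℕ → K} {z : K} {n : ℕ} (hz : z ≠ 0) (hμ : ∀ j < n, μ j = 0)
    (h : HasSum (fun i => μ i * z ^ i) 0) : HasSum (fun j => μ (j + n) * z ^ j) 0 := by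
  have htail := (hasSum_nat_add_iff' n).2 h
  rw [sum_eq_zero fun j hj => by rw [hμ j (mem_range.1 hj), zero_mul], sub_zero] at htail
  simpa [pow_add, mul_assoc, hz] using htail.mul_right (z ^ n)⁻¹

section Decay

variable {μ : ℕ → ℂ} {q m C : ℝ}

lemma exists_norm_le_of_summable_sq_mul_rpow (hq : 0 < q)
    (hsum : Summable fun i : ℕ => ‖μ i‖ ^ 2 * q ^ ((i : ℝ) ^ 2 + m * i)) :
    ∃ C, ∀ i : ℕ, ‖μ i‖ ≤ C * q ^ (-((i : ℝ) ^ 2 + m * i) / 2) := by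
  refine ⟨√(∑' i, ‖μ i‖ ^ 2 * q ^ ((i : ℝ) ^ 2 + m * i)), fun i => ?_⟩
  set e : ℝ := (i : ℝ) ^ 2 + m * i
  have hsq : ‖μ i‖ * q ^ (e / 2) = √(‖μ i‖ ^ 2 * q ^ e) := by
    rw [sqrt_mul (by positivity), sqrt_sq (norm_nonneg _), sqrt_eq_rpow, ← rpow_mul hq.le]
    ring_nf
  calc ‖μ i‖ = ‖μ i‖ * q ^ (e / 2) * q ^ (-e / 2) := by
        rw [mul_assoc, ← rpow_add hq]; ring_nf; rw [rpow_zero, mul_one]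
    _ ≤ _ := by
        rw [hsq]
        gcongr
        exact hsum.le_tsum i fun j _ => by positivity

lemma summable_rpow_neg_sq_mul_pow (hq : 1 < q) (m : ℝ) {x : ℝ} (hx : 0 ≤ x) :
    Summable fun i : ℕ => q ^ (-((i : ℝ) ^ 2 + m * i) / 2) * x ^ i := by
  have hq0 : 0 < q := one_pos.trans hq
  have hexp : Tendsto (fun i : ℕ => -(2 * (i : ℝ) + 1 + m) / 2) atTop atBot :=
    (tendsto_neg_atTop_atBot.comp <| tendsto_atTop_add_const_right _ _ <|
      tendsto_atTop_add_const_right _ _ <| tendsto_natCast_atTop_atTop.const_mul_atTop two_pos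
      ).atBot_div_const two_pos
  have hratio : ∀ᶠ i : ℕ in atTop, q ^ (-(2 * (i : ℝ) + 1 + m) / 2) * x ≤ 1 / 2 := by
    refine Tendsto.eventually_le_const (v := 0) (by norm_num) ?_
    simpa using ((tendsto_rpow_atBot_of_base_gt_one q hq).comp hexp).mul_const x
  refine summable_of_ratio_norm_eventually_le (r := 1 / 2) (by norm_num) ?_
  filter_upwards [hratio] with i hi
  have hstep : q ^ (-(((i + 1 : ℕ) : ℝ) ^ 2 + m * (i + 1 : ℕ)) / 2)
      = q ^ (-(2 * (i : ℝ) + 1 + m) / 2) * q ^ (-((i : ℝ) ^ 2 + m * i) / 2) := by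
    rw [← rpow_add hq0]; push_cast; ring_nf
  rw [norm_of_nonneg (by positivity), norm_of_nonneg (by positivity), hstep, pow_succ x i]
  calc _ = (q ^ (-(2 * (i : ℝ) + 1 + m) / 2) * x)
        * (q ^ (-((i : ℝ) ^ 2 + m * i) / 2) * x ^ i) := by ring
    _ ≤ _ := mul_le_mul_of_nonneg_right hi (by positivity)

lemma summable_mul_pow_of_norm_le (hq : 1 < q)
    (hμ : ∀ i : ℕ, ‖μ i‖ ≤ C * q ^ (-((i : ℝ) ^ 2 + m * i) / 2)) (z : ℂ) :
    Summable fun i => μ i * z ^ i := by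
  refine ((summable_rpow_neg_sq_mul_pow hq m (norm_nonneg z)).mul_left C).of_norm_bounded
    fun i => ?_
  rw [norm_mul, norm_pow, ← mul_assoc]
  exact mul_le_mul_of_nonneg_right (hμ i) (by positivity)

lemma norm_nat_add_le (hq : 0 < q)
    (hμ : ∀ i : ℕ, ‖μ i‖ ≤ C * q ^ (-((i : ℝ) ^ 2 + m * i) / 2)) (n j : ℕ) :
    ‖μ (j + n)‖ ≤ C * q ^ (-((n : ℝ) ^ 2 + m * n) / 2)
      * q ^ (-((j : ℝ) ^ 2 + (m + 2 * n) * j) / 2) := by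
  rw [mul_assoc, ← rpow_add hq]
  convert hμ (j + n) using 3
  push_cast; ring

end Decay

noncomputable def vanishingPoly {F : Type*} [Field F] (q : F) (K : ℕ) : F[X] :=
  ∏ j ∈ range K, (1 - C (q ^ (j + 1))⁻¹ * X)

lemma eval_vanishingPoly {F : Type*} [Field F] (q z : F) (K : ℕ) :
    (vanishingPoly q K).eval z = ∏ j ∈ range K, (1 - z / q ^ (j + 1)) := by
  simp [vanishingPoly, eval_prod, div_eq_inv_mul]

lemma eval_vanishingPoly_pow_eq_zero {F : Type*} [Field F] {q : F} (hq : q ≠ 0) {K i : ℕ}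
    (hi : 0 < i) (hiK : i ≤ K) : (vanishingPoly q K).eval (q ^ i) = 0 := by
  rw [eval_vanishingPoly]
  refine prod_eq_zero (i := i - 1) (mem_range.2 (by omega)) ?_
  rw [Nat.sub_add_cancel hi, div_self (pow_ne_zero _ hq), sub_self]

lemma exists_pos_le_norm_eval_one_vanishingPoly {q : ℝ} (hq : 1 < q) :
    ∃ c > 0, ∀ K, c ≤ ‖(vanishingPoly (q : ℂ) K).eval 1‖ := by
  have hq0 : 0 ≤ q⁻¹ := by positivity
  have hq1 : q⁻¹ < 1 := inv_lt_one_of_one_lt₀ hq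
  have hs : Summable fun j : ℕ => (q ^ (j + 1))⁻¹ :=
    ((summable_geometric_of_lt_one hq0 hq1).mul_left q⁻¹).congr fun j => by
      rw [← pow_succ', inv_pow]
  refine ⟨exp (-((∑' j : ℕ, (q ^ (j + 1))⁻¹) / (1 - q⁻¹))), exp_pos _, fun K => ?_⟩
  have hprod := exp_neg_tsum_div_le_prod_one_sub hs (fun j => by positivity)
    (fun j => inv_anti₀ (by positivity) (le_self_pow₀ hq.le j.succ_ne_zero)) hq1 (range K)
  have heval : (vanishingPoly (q : ℂ) K).eval 1
      = ((∏ j ∈ range K, (1 - (q ^ (j + 1))⁻¹) : ℝ) : ℂ) := by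
    rw [eval_vanishingPoly]; push_cast; simp [one_div]
  rwa [heval, Complex.norm_real, norm_of_nonneg ((exp_pos _).le.trans hprod)]

lemma norm_eval_vanishingPoly_pow_le {q : ℝ} (hq : 1 ≤ q) {K i : ℕ} (hKi : K ≤ i) :
    ‖(vanishingPoly (q : ℂ) K).eval ((q : ℂ) ^ i)‖ ≤ q ^ ((K : ℝ) * i - K * (K + 1) / 2) := by
  have hq0 : 0 < q := one_pos.trans_le hq
  have hgauss : ∀ n : ℕ, ∑ j ∈ range n, ((j : ℝ) + 1) = n * (n + 1) / 2 := fun n => by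
    induction n with
    | zero => simp
    | succ n ih => rw [sum_range_succ, ih]; push_cast; ring
  rw [eval_vanishingPoly, norm_prod]
  calc ∏ j ∈ range K, ‖1 - (q : ℂ) ^ i / (q : ℂ) ^ (j + 1)‖
      ≤ ∏ j ∈ range K, q ^ ((i : ℝ) - (j + 1)) := by
        refine prod_le_prod (fun _ _ => norm_nonneg _) fun j hj => ?_
        have hji : (j : ℝ) + 1 ≤ i := by exact_mod_cast (mem_range.1 hj).trans_le hKi
        have hfac : (q : ℂ) ^ i / (q : ℂ) ^ (j + 1)
            = ((q ^ ((i : ℝ) - (j + 1)) : ℝ) : ℂ) := by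
          rw [rpow_sub hq0, ← Nat.cast_succ, rpow_natCast, rpow_natCast]; push_cast; rfl
        have hone : 1 ≤ q ^ ((i : ℝ) - (j + 1)) := one_le_rpow hq (by linarith)
        rw [hfac, ← Complex.ofReal_one, ← Complex.ofReal_sub, Complex.norm_real, norm_eq_abs,
          abs_sub_comm, abs_of_nonneg (by linarith)]
        linarith
    _ = q ^ (∑ j ∈ range K, ((i : ℝ) - (j + 1))) := (rpow_sum_of_pos hq0 _ _).symm
    _ = _ := by rw [sum_sub_distrib, sum_const, card_range, hgauss, nsmul_eq_mul]

section Vanishing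

variable {μ : ℕ → ℂ} {q m C : ℝ}

lemma norm_mul_eval_vanishingPoly_le (hq : 1 < q)
    (hμ : ∀ i : ℕ, ‖μ i‖ ≤ C * q ^ (-((i : ℝ) ^ 2 + m * i) / 2)) {K i : ℕ} (hKi : K < i) :
    ‖μ i * (vanishingPoly (q : ℂ) K).eval ((q : ℂ) ^ i)‖ ≤ C * (q ^ (-(m + 1) / 2)) ^ i := by
  have hq0 : 0 < q := one_pos.trans hq
  have hC : 0 ≤ C := nonneg_of_mul_nonneg_left ((norm_nonneg _).trans (hμ 0)) (by positivity)
  have hexp :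
      -((i : ℝ) ^ 2 + m * i) / 2 + ((K : ℝ) * i - K * (K + 1) / 2) ≤ -(m + 1) / 2 * i := by
    have : (K : ℝ) + 1 ≤ i := by exact_mod_cast hKi
    -- the gap is `(i - K) * (i - K - 1) / 2`
    nlinarith
  rw [norm_mul, ← rpow_natCast, ← rpow_mul hq0.le]
  calc ‖μ i‖ * ‖(vanishingPoly (q : ℂ) K).eval ((q : ℂ) ^ i)‖
      ≤ C * q ^ (-((i : ℝ) ^ 2 + m * i) / 2) * q ^ ((K : ℝ) * i - K * (K + 1) / 2) :=
        mul_le_mul (hμ i) (norm_eval_vanishingPoly_pow_le hq.le hKi.le) (norm_nonneg _)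
          ((norm_nonneg _).trans (hμ i))
    _ ≤ _ := by
        rw [mul_assoc, ← rpow_add hq0]
        exact mul_le_mul_of_nonneg_left (rpow_le_rpow_of_exponent_le hq.le hexp) hC

lemma norm_mul_eval_one_vanishingPoly_le (hq : 1 < q) (hm : -1 < m)
    (hμ : ∀ i : ℕ, ‖μ i‖ ≤ C * q ^ (-((i : ℝ) ^ 2 + m * i) / 2))
    (hf : ∀ k : ℕ, HasSum (fun i => μ i * ((q : ℂ) ^ k) ^ i) 0) (K : ℕ) :
    ‖μ 0 * (vanishingPoly (q : ℂ) K).eval 1‖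
      ≤ C * (q ^ (-(m + 1) / 2)) ^ (K + 1) / (1 - q ^ (-(m + 1) / 2)) := by
  have hq0 : 0 < q := one_pos.trans hq
  set r := q ^ (-(m + 1) / 2)
  have hr0 : 0 ≤ r := by positivity
  have hr1 : r < 1 := rpow_lt_one_of_one_lt_of_neg hq (by linarith)
  have htail :=
    (hasSum_nat_add_iff' (K + 1)).2 (hasSum_mul_eval_pow hf (vanishingPoly (q : ℂ) K))
  have hhead : ∑ i ∈ range (K + 1), μ i * (vanishingPoly (q : ℂ) K).eval ((q : ℂ) ^ i)
      = μ 0 * (vanishingPoly (q : ℂ) K).eval 1 := by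
    rw [sum_range_succ', sum_eq_zero fun i hi => ?_, zero_add, pow_zero]
    rw [eval_vanishingPoly_pow_eq_zero (by simp [hq0.ne']) i.succ_pos (mem_range.1 hi),
      mul_zero]
  rw [hhead, zero_sub] at htail
  simpa [div_eq_mul_inv] using htail.norm_le_of_bounded
    ((hasSum_geometric_of_lt_one hr0 hr1).mul_left (C * r ^ (K + 1))) fun t =>
      (norm_mul_eval_vanishingPoly_le hq hμ (by omega)).trans_eq (by ring)

lemma apply_zero_eq_zero_of_hasSum_zero (hq : 1 < q) (hm : -1 < m)
    (hμ : ∀ i : ℕ, ‖μ i‖ ≤ C * q ^ (-((i : ℝ) ^ 2 + m * i) / 2))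
    (hf : ∀ k : ℕ, HasSum (fun i => μ i * ((q : ℂ) ^ k) ^ i) 0) : μ 0 = 0 := by
  obtain ⟨c, hc, hcK⟩ := exists_pos_le_norm_eval_one_vanishingPoly hq
  set r := q ^ (-(m + 1) / 2)
  have hr0 : 0 ≤ r := by positivity
  have hr1 : r < 1 := rpow_lt_one_of_one_lt_of_neg hq (by linarith)
  have hlim : Tendsto (fun K : ℕ => C * r ^ (K + 1) / (1 - r)) atTop (𝓝 0) := by
    simpa using (((tendsto_pow_atTop_nhds_zero_of_lt_one hr0 hr1).comp
      (tendsto_add_atTop_nat 1)).const_mul C).div_const (1 - r)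
  have hle : ‖μ 0‖ * c ≤ 0 := ge_of_tendsto' hlim fun K =>
    calc ‖μ 0‖ * c ≤ ‖μ 0 * (vanishingPoly (q : ℂ) K).eval 1‖ := by
          rw [norm_mul]; exact mul_le_mul_of_nonneg_left (hcK K) (norm_nonneg _)
      _ ≤ _ := norm_mul_eval_one_vanishingPoly_le hq hm hμ hf K
  exact norm_le_zero_iff.1 (nonpos_of_mul_nonpos_left hle hc)

end Vanishing

/-- vanishing lemma. If `Σ_i |μ_i|²·q^{i²+mi} < ∞` and the entire function
`f(z) = Σ_i μ_i z^i` vanishes at every point `q^k`, `k ∈ ℕ`, then `μ = 0`. -/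
theorem stmt7 (q m : ℝ) (hq : 1 < q) (hm : -1 < m) (μ : ℕ → ℂ)
    (hsum : Summable fun i : ℕ => ‖μ i‖ ^ 2 * q ^ ((i : ℝ) ^ 2 + m * (i : ℝ)))
    (hzero : ∀ k : ℕ, ∑' i : ℕ, μ i * ((q : ℂ) ^ k) ^ i = 0) :
    ∀ i : ℕ, μ i = 0 := by
  have hq0 : 0 < q := one_pos.trans hq
  obtain ⟨C, hC⟩ := exists_norm_le_of_summable_sq_mul_rpow hq0 hsum
  have hf : ∀ k : ℕ, HasSum (fun i => μ i * ((q : ℂ) ^ k) ^ i) 0 := fun k =>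
    hzero k ▸ (summable_mul_pow_of_norm_le hq hC _).hasSum
  intro n
  induction n using Nat.strong_induction_on with
  | _ n ih =>
    have hm' : -1 < m + 2 * n := by linarith [n.cast_nonneg (α := ℝ)]
    simpa using apply_zero_eq_zero_of_hasSum_zero hq hm' (norm_nat_add_le hq0 hC n)
      fun k => hasSum_mul_pow_nat_add (by simp [hq0.ne']) ih (hf k)
end

section
/- Let q > 1 be real and define b_i := (−1)^i / ∏_{j=1}^{i}(q^j − 1) and μ_i := b_i q^i for i ≥ 0. Then: (i) for every real m < −1, Σ_{i=0}^{∞} |μ_i|² q^{i² + mi} < ∞; (ii) the entire function f(z) := Σ_{i=0}^{∞} μ_i z^i equals ∏_{k=0}^{∞}(1 − q^{−k} z) for all z ∈ ℂ, and in particular f(q^k) = 0 for every integer k ≥ 0; (iii) f is not identically zero, since μ_0 = 1. Hence the vanishing lemma for power series with Σ|μ_i|² q^{i²+mi} < ∞ fails for every m < −1. -/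
noncomputable section

/-- `b_i = (−1)^i / ∏_{j=1}^{i}(q^j − 1)`. -/
def bCoef (q : ℝ) (i : ℕ) : ℝ := (-1) ^ i / ∏ j ∈ Finset.range i, (q ^ (j + 1) - 1)

/-- `μ_i = b_i·q^i`. -/
def muCoef (q : ℝ) (i : ℕ) : ℝ := bCoef q i * q ^ i

/-!
The coefficients satisfy `μ_{i+1} (q^{i+1} - 1) = -q μ_i`, so `|μ_{i+1}| / |μ_i| → 0` and
`f z = ∑ μ_i z^i` is entire. Comparing coefficients, the same recurrence says exactly that
`f z = (1 - z) f (z / q)`. Iterating, `f z = (∏_{k<N} (1 - q^{-k} z)) f (z / q^N)`, and since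
`f (z / q^N) → f 0 = 1` the partial products converge to `f z`. At `z = q^k`, `N = k + 1`, the
last factor vanishes.
For (i), the ratio of consecutive terms tends to `q^{1+m} < 1`.
-/

open Filter Topology Finset

section ProductFormula
variable {𝕜 : Type*} [NormedField 𝕜] {f : 𝕜 → 𝕜} {q : 𝕜}

theorem eq_prod_range_mul_of_eq_one_sub_mul (hf : ∀ z, f z = (1 - z) * f (z / q))
    (z : 𝕜) (N : ℕ) : f z = (∏ k ∈ range N, (1 - (q ^ k)⁻¹ * z)) * f (z / q ^ N) := by
  induction N with
  | zero => simp
  | succ n ih =>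
    rw [ih, hf (z / q ^ n), prod_range_succ, div_div, ← pow_succ, div_eq_inv_mul z (q ^ n)]
    ring

variable [CompleteSpace 𝕜]

theorem multipliable_one_sub_inv_pow_mul (hq : 1 < ‖q‖) (z : 𝕜) :
    Multipliable fun k : ℕ => 1 - (q ^ k)⁻¹ * z := by
  have hgeom : Summable fun k : ℕ => ‖q⁻¹‖ ^ k * ‖z‖ :=
    (summable_geometric_of_lt_one (norm_nonneg _)
      (by rw [norm_inv]; exact inv_lt_one_of_one_lt₀ hq)).mul_right _
  simp_rw [sub_eq_add_neg]
  exact multipliable_one_add_of_summable (by simpa [inv_pow] using hgeom)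

theorem tprod_one_sub_inv_pow_mul_eq (hq : 1 < ‖q‖) (hf : ∀ z, f z = (1 - z) * f (z / q))
    (hf0 : ContinuousAt f 0) (hf1 : f 0 = 1) (z : 𝕜) :
    ∏' k : ℕ, (1 - (q ^ k)⁻¹ * z) = f z := by
  have hq' : ‖q⁻¹‖ < 1 := by rw [norm_inv]; exact inv_lt_one_of_one_lt₀ hq
  have hsmall : Tendsto (fun N : ℕ => z / q ^ N) atTop (𝓝 0) := by
    simpa [div_eq_mul_inv, inv_pow] using
      (tendsto_pow_atTop_nhds_zero_of_norm_lt_one hq').const_mul z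
  have hlim := ((multipliable_one_sub_inv_pow_mul hq z).hasProd.tendsto_prod_nat).mul
    (hf1 ▸ hf0.tendsto.comp hsmall)
  rw [mul_one] at hlim
  exact tendsto_nhds_unique hlim
    (tendsto_const_nhds.congr (eq_prod_range_mul_of_eq_one_sub_mul hf z))

end ProductFormula

theorem muCoef_zero (q : ℝ) : muCoef q 0 = 1 := by simp [muCoef, bCoef]

theorem muCoef_succ (q : ℝ) (i : ℕ) :
    muCoef q (i + 1) = muCoef q i * (-q / (q ^ (i + 1) - 1)) := by
  simp only [muCoef, bCoef, prod_range_succ, pow_succ, div_eq_mul_inv, mul_inv]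
  ring

def muSeries (q : ℝ) : FormalMultilinearSeries ℝ ℂ ℂ := .ofScalars ℂ (muCoef q)

theorem muSeries_apply (q : ℝ) (i : ℕ) (z : ℂ) :
    muSeries q i (fun _ => z) = muCoef q i * z ^ i := by
  rw [muSeries, FormalMultilinearSeries.ofScalars_apply_eq, Complex.real_smul]

theorem muSeries_sum_apply (q : ℝ) (z : ℂ) :
    (muSeries q).sum z = ∑' i, (muCoef q i : ℂ) * z ^ i :=
  tsum_congr fun i => muSeries_apply q i z

theorem muSeries_sum_zero (q : ℝ) : (muSeries q).sum 0 = 1 := by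
  rw [muSeries_sum_apply, tsum_eq_single 0 fun i hi => by simp [hi], muCoef_zero]
  simp

section OneLt
variable {q : ℝ} (hq : 1 < q)
include hq

theorem pow_succ_sub_one_pos (i : ℕ) : 0 < q ^ (i + 1) - 1 :=
  sub_pos.mpr (one_lt_pow₀ hq i.succ_ne_zero)

theorem abs_muCoef_succ (i : ℕ) :
    |muCoef q (i + 1)| = |muCoef q i| * (q / (q ^ (i + 1) - 1)) := by
  rw [muCoef_succ, abs_mul, abs_div, abs_neg, abs_of_pos (by linarith : 0 < q),
    abs_of_pos (pow_succ_sub_one_pos hq i)]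

theorem muCoef_ne_zero (i : ℕ) : muCoef q i ≠ 0 := by
  induction i with
  | zero => simp [muCoef_zero]
  | succ n ih =>
    rw [muCoef_succ]
    exact mul_ne_zero ih (div_ne_zero (by linarith) (pow_succ_sub_one_pos hq n).ne')

theorem tendsto_pow_succ_sub_one_atTop : Tendsto (fun i : ℕ => q ^ (i + 1) - 1) atTop atTop :=
  tendsto_atTop_add_const_right _ _
    ((tendsto_pow_atTop_atTop_of_one_lt hq).comp (tendsto_add_atTop_nat 1))

theorem tendsto_norm_muCoef_succ_div_norm :
    Tendsto (fun i => ‖muCoef q (i + 1)‖ / ‖muCoef q i‖) atTop (𝓝 0) := by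
  have h := (tendsto_pow_succ_sub_one_atTop hq).inv_tendsto_atTop.const_mul q
  rw [mul_zero] at h
  refine h.congr fun i => ?_
  rw [Real.norm_eq_abs, Real.norm_eq_abs, abs_muCoef_succ hq,
    mul_div_cancel_left₀ _ (abs_ne_zero.mpr (muCoef_ne_zero hq i)), div_eq_mul_inv]
  rfl

theorem muSeries_radius : (muSeries q).radius = ⊤ :=
  FormalMultilinearSeries.ofScalars_radius_eq_top_of_tendsto _ _
    (.of_forall (muCoef_ne_zero hq)) (tendsto_norm_muCoef_succ_div_norm hq)

theorem summable_muCoef_mul_pow (z : ℂ) : Summable fun i => (muCoef q i : ℂ) * z ^ i := by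
  simpa only [muSeries_apply] using
    (muSeries q).summable (x := z) (by simp [muSeries_radius hq])

theorem continuous_muSeries_sum : Continuous (muSeries q).sum := by
  simpa [muSeries_radius hq, continuousOn_univ] using (muSeries q).continuousOn

theorem muSeries_sum_eq_one_sub_mul (z : ℂ) :
    (muSeries q).sum z = (1 - z) * (muSeries q).sum (z / q) := by
  have hq0 : (q : ℂ) ≠ 0 := Complex.ofReal_ne_zero.mpr (by linarith)
  have hterm (i : ℕ) : (muCoef q (i + 1) : ℂ) * z ^ (i + 1) =
      muCoef q (i + 1) * (z / q) ^ (i + 1) - z * (muCoef q i * (z / q) ^ i) := by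
    have hsub : (q : ℂ) ^ (i + 1) - 1 ≠ 0 := by
      exact_mod_cast (pow_succ_sub_one_pos hq i).ne'
    rw [muCoef_succ, div_pow, div_pow]
    push_cast
    field_simp
    ring
  have hs := summable_muCoef_mul_pow hq (z / q)
  have htail : ∑' i, (muCoef q (i + 1) : ℂ) * (z / q) ^ (i + 1) =
      ∑' i, (muCoef q i : ℂ) * (z / q) ^ i - 1 := by
    simp [hs.tsum_eq_zero_add, muCoef_zero]
  simp only [muSeries_sum_apply]
  rw [(summable_muCoef_mul_pow hq z).tsum_eq_zero_add, tsum_congr hterm,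
    ((summable_nat_add_iff 1).mpr hs).tsum_sub (hs.mul_left z), tsum_mul_left, htail,
    muCoef_zero, Complex.ofReal_one]
  ring

theorem sq_abs_muCoef_mul_rpow_succ (m : ℝ) (i : ℕ) :
    |muCoef q (i + 1)| ^ 2 * q ^ (((i + 1 : ℕ) : ℝ) ^ 2 + m * (i + 1 : ℕ)) =
      |muCoef q i| ^ 2 * q ^ ((i : ℝ) ^ 2 + m * i) *
        (q ^ (1 + m) * (q ^ (i + 1) / (q ^ (i + 1) - 1)) ^ 2) := by
  have hexp : ((i + 1 : ℕ) : ℝ) ^ 2 + m * (i + 1 : ℕ) =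
      ((i : ℝ) ^ 2 + m * i) + (1 + m) + (i * 2 : ℕ) := by
    push_cast; ring
  rw [hexp, Real.rpow_add (by linarith), Real.rpow_add (by linarith), Real.rpow_natCast, pow_mul,
    abs_muCoef_succ hq, pow_succ]
  ring

theorem summable_sq_abs_muCoef_mul_rpow {m : ℝ} (hm : m < -1) :
    Summable fun i : ℕ => |muCoef q i| ^ 2 * q ^ ((i : ℝ) ^ 2 + m * i) := by
  have hpos (i : ℕ) : 0 < |muCoef q i| ^ 2 * q ^ ((i : ℝ) ^ 2 + m * i) := by
    have := muCoef_ne_zero hq i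
    have := Real.rpow_pos_of_pos (by linarith : 0 < q) ((i : ℝ) ^ 2 + m * i)
    positivity
  have hratio : Tendsto (fun i : ℕ => q ^ (1 + m) * (q ^ (i + 1) / (q ^ (i + 1) - 1)) ^ 2)
      atTop (𝓝 (q ^ (1 + m) * (1 + 0) ^ 2)) := by
    have hinv := (tendsto_pow_succ_sub_one_atTop hq).inv_tendsto_atTop
    refine ((tendsto_const_nhds.add hinv).pow 2).const_mul _ |>.congr fun i => ?_
    have := (pow_succ_sub_one_pos hq i).ne'
    simp only [Pi.inv_apply]
    field_simp
    ring
  rw [add_zero, one_pow, mul_one] at hratio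
  refine summable_of_ratio_test_tendsto_lt_one
    (Real.rpow_lt_one_of_one_lt_of_neg hq (by linarith)) (.of_forall fun i => (hpos i).ne')
    (hratio.congr fun i => ?_)
  rw [Real.norm_of_nonneg (hpos _).le, Real.norm_of_nonneg (hpos _).le,
    sq_abs_muCoef_mul_rpow_succ hq, mul_div_cancel_left₀ _ (hpos i).ne']

end OneLt

/-- With `μ_i = b_i q^i`: (i) `Σ |μ_i|² q^{i²+mi} < ∞` for every `m < −1`;
(ii) `Σ_i μ_i z^i = ∏_{k≥0}(1 − q^{−k}z)` for all `z ∈ ℂ`, so it vanishes at every `q^k`;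
(iii) the function is not identically zero since `μ_0 = 1`.  Hence the vanishing lemma fails
for every `m < −1`. -/
theorem stmt8 (q : ℝ) (hq : 1 < q) :
    (∀ m : ℝ, m < -1 →
      Summable fun i : ℕ => |muCoef q i| ^ 2 * q ^ ((i : ℝ) ^ 2 + m * (i : ℝ))) ∧
    (∀ z : ℂ, ∑' i : ℕ, (muCoef q i : ℂ) * z ^ i = ∏' k : ℕ, (1 - ((q : ℂ) ^ k)⁻¹ * z)) ∧
    (∀ k : ℕ, ∑' i : ℕ, (muCoef q i : ℂ) * ((q : ℂ) ^ k) ^ i = 0) ∧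
    muCoef q 0 = 1 := by
  have hfun := muSeries_sum_eq_one_sub_mul hq
  refine ⟨fun m hm => summable_sq_abs_muCoef_mul_rpow hq hm, fun z => ?_, fun k => ?_,
    muCoef_zero q⟩
  · rw [← muSeries_sum_apply]
    have hnorm : 1 < ‖(q : ℂ)‖ := by
      rwa [Complex.norm_real, Real.norm_of_nonneg (by linarith)]
    exact (tprod_one_sub_inv_pow_mul_eq hnorm hfun (continuous_muSeries_sum hq).continuousAt
      (muSeries_sum_zero q) z).symm
  · have hqk : ((q : ℂ) ^ k)⁻¹ * (q : ℂ) ^ k = 1 :=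
      inv_mul_cancel₀ (pow_ne_zero k (Complex.ofReal_ne_zero.mpr (by linarith)))
    rw [← muSeries_sum_apply, eq_prod_range_mul_of_eq_one_sub_mul hfun _ (k + 1),
      prod_eq_zero (self_mem_range_succ k) (by rw [hqk, sub_self]), zero_mul]
end
end

section
/- Let P be an irreducible and aperiodic row-stochastic matrix on a countable set I that is reversible with respect to a stationary probability distribution π with π(i) > 0 for all i. Then, as an operator on ℓ²(π): (a) −1 is not an eigenvalue of P, i.e. no nonzero μ ∈ ℓ²(π) satisfies μP = −μ; and (b) every μ ∈ ℓ²(π) with μP = μ is a scalar multiple of π. -/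
/-! Put `f := μ / π`. Reversibility turns `μP = εμ` into `Pf = εf`. For `‖ε‖ = 1` the form
`∑ π i P i j ‖f j - ε f i‖²` expands to `2 ∑ π i ‖f i‖² - 2 Re (conj ε ∑ π i conj (f i) (Pf) i)`,
which vanishes because `Pf = εf`. So `f j = ε f i` along every edge, hence `f j = εⁿ f i`
whenever `Pⁿ i j > 0`. For `ε = -1` aperiodicity yields an odd loop at `i`, forcing
`f i = -f i`; for `ε = 1` irreducibility makes `f` constant. -/

open ComplexConjugate

noncomputable section

def Ppow {I : Type} [DecidableEq I] (P : I → I → ℝ) : ℕ → I → I → ℝ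
  | 0 => fun i j => if i = j then 1 else 0
  | n + 1 => fun i j => ∑' k : I, Ppow P n i k * P k j

section Paths

variable {I : Type} [DecidableEq I] {P : I → I → ℝ}

lemma Ppow_nonneg (hP : ∀ i j, 0 ≤ P i j) : ∀ n i j, 0 ≤ Ppow P n i j
  | 0, i, j => by unfold Ppow; split <;> norm_num
  | n + 1, i, j => tsum_nonneg fun k => mul_nonneg (Ppow_nonneg hP n i k) (hP k j)

lemma exists_Ppow_pos_of_Ppow_succ_pos (hP : ∀ i j, 0 ≤ P i j) {n : ℕ} {i j : I}
    (h : 0 < Ppow P (n + 1) i j) : ∃ k, 0 < Ppow P n i k ∧ 0 < P k j := by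
  by_contra! hc
  have hzero : ∀ k, Ppow P n i k * P k j = 0 := fun k =>
    (Ppow_nonneg hP n i k).eq_or_lt.elim (fun h0 => by rw [← h0, zero_mul])
      (fun hpos => by rw [le_antisymm (hc k hpos) (hP k j), mul_zero])
  simp [Ppow, hzero] at h

lemma eq_pow_mul_of_Ppow_pos {M : Type*} [Monoid M] (hP : ∀ i j, 0 ≤ P i j) {f : I → M} {ε : M}
    (hstep : ∀ i j, 0 < P i j → f j = ε * f i) : ∀ n i j, 0 < Ppow P n i j → f j = ε ^ n * f i
  | 0, i, j, h => by
    by_cases hij : i = j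
    · simp [hij]
    · simp [Ppow, hij] at h
  | n + 1, i, j, h => by
    obtain ⟨k, hik, hkj⟩ := exists_Ppow_pos_of_Ppow_succ_pos hP h
    rw [hstep k j hkj, eq_pow_mul_of_Ppow_pos hP hstep n i k hik, pow_succ', mul_assoc]

end Paths

section Dirichlet

variable {I : Type} {π : I → ℝ} {P : I → I → ℝ}

lemma hasSum_edge_fst (hπ : ∀ i, 0 ≤ π i) (hP : ∀ i j, 0 ≤ P i j) (hProw : ∀ i, HasSum (P i) 1)
    {h : I → ℝ} (h0 : ∀ i, 0 ≤ h i) {s : ℝ} (hs : HasSum (fun i => π i * h i) s) :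
    HasSum (fun p : I × I => π p.1 * P p.1 p.2 * h p.1) s := by
  have hfib : ∀ i, HasSum (fun j => π i * P i j * h i) (π i * h i) := fun i => by
    simpa using ((hProw i).mul_left (π i)).mul_right (h i)
  have hsum : Summable fun p : I × I => π p.1 * P p.1 p.2 * h p.1 :=
    (summable_prod_of_nonneg fun p => mul_nonneg (mul_nonneg (hπ _) (hP _ _)) (h0 _)).2
      ⟨fun i => (hfib i).summable, by simpa only [(hfib _).tsum_eq] using hs.summable⟩
  exact (hsum.hasSum.prod_fiberwise hfib).unique hs ▸ hsum.hasSum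

lemma hasSum_edge_snd (hπ : ∀ i, 0 ≤ π i) (hP : ∀ i j, 0 ≤ P i j) (hProw : ∀ i, HasSum (P i) 1)
    (hrev : ∀ i j, π i * P i j = π j * P j i)
    {h : I → ℝ} (h0 : ∀ i, 0 ≤ h i) {s : ℝ} (hs : HasSum (fun i => π i * h i) s) :
    HasSum (fun p : I × I => π p.1 * P p.1 p.2 * h p.2) s := by
  rw [← (Equiv.prodComm I I).hasSum_iff]
  simpa only [Function.comp_def, Equiv.prodComm_apply, Prod.fst_swap, Prod.snd_swap, hrev]
    using hasSum_edge_fst hπ hP hProw h0 hs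

lemma hasSum_edge_conj_mul (hπ : ∀ i, 0 ≤ π i) (hP : ∀ i j, 0 ≤ P i j)
    (hProw : ∀ i, HasSum (P i) 1) (hrev : ∀ i j, π i * P i j = π j * P j i)
    {f : I → ℂ} {S : ℝ} (hf : HasSum (fun i => π i * ‖f i‖ ^ 2) S) {ε : ℂ}
    (hharm : ∀ i, ∑' j, (P i j : ℂ) * f j = ε * f i) :
    HasSum (fun p : I × I => ((π p.1 * P p.1 p.2 : ℝ) : ℂ) * (conj (f p.1) * f p.2)) (ε * S) := by
  have hsq : ∀ i, 0 ≤ ‖f i‖ ^ 2 := fun i => sq_nonneg _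
  have hsum : Summable fun p : I × I => ((π p.1 * P p.1 p.2 : ℝ) : ℂ) * (conj (f p.1) * f p.2) := by
    refine Summable.of_norm_bounded
      ((hasSum_edge_fst hπ hP hProw hsq hf).add (hasSum_edge_snd hπ hP hProw hrev hsq hf)).summable
      fun p => ?_
    have hw : 0 ≤ π p.1 * P p.1 p.2 := mul_nonneg (hπ _) (hP _ _)
    rw [norm_mul, norm_mul, Complex.norm_conj, Complex.norm_real, Real.norm_of_nonneg hw]
    nlinarith [mul_nonneg hw (sq_nonneg (‖f p.1‖ - ‖f p.2‖)), mul_nonneg hw (norm_nonneg (f p.1)),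
      mul_nonneg (mul_nonneg hw (norm_nonneg (f p.1))) (norm_nonneg (f p.2))]
  have hfib : ∀ i, HasSum (fun j => ((π i * P i j : ℝ) : ℂ) * (conj (f i) * f j))
      (ε * ((π i * ‖f i‖ ^ 2 : ℝ) : ℂ)) := by
    intro i
    refine (hsum.prod_factor i).hasSum_iff.2 ?_
    calc ∑' j, ((π i * P i j : ℝ) : ℂ) * (conj (f i) * f j)
        = π i * conj (f i) * ∑' j, (P i j : ℂ) * f j := by
          rw [← tsum_mul_left]; exact tsum_congr fun j => by push_cast; ring
      _ = ε * ((π i * ‖f i‖ ^ 2 : ℝ) : ℂ) := by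
          push_cast; rw [hharm, ← Complex.mul_conj']; ring
  exact (hsum.hasSum.prod_fiberwise hfib).unique ((Complex.hasSum_ofReal.2 hf).mul_left ε) ▸
    hsum.hasSum

lemma hasSum_edge_norm_sub_mul_sq (hπ : ∀ i, 0 ≤ π i) (hP : ∀ i j, 0 ≤ P i j)
    (hProw : ∀ i, HasSum (P i) 1) (hrev : ∀ i j, π i * P i j = π j * P j i)
    {f : I → ℂ} {S : ℝ} (hf : HasSum (fun i => π i * ‖f i‖ ^ 2) S) {ε : ℂ} (hε : ‖ε‖ = 1)
    (hharm : ∀ i, ∑' j, (P i j : ℂ) * f j = ε * f i) :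
    HasSum (fun p : I × I => π p.1 * P p.1 p.2 * ‖f p.2 - ε * f p.1‖ ^ 2) 0 := by
  have hsq : ∀ i, 0 ≤ ‖f i‖ ^ 2 := fun i => sq_nonneg _
  have hcross := Complex.hasSum_re
    ((hasSum_edge_conj_mul hπ hP hProw hrev hf hharm).mul_left (conj ε))
  have hεε : conj ε * (ε * S) = S := by
    rw [← mul_assoc, Complex.conj_mul', hε]; simp
  rw [hεε, Complex.ofReal_re] at hcross
  have hexpand : ∀ p : I × I, π p.1 * P p.1 p.2 * ‖f p.2 - ε * f p.1‖ ^ 2 =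
      π p.1 * P p.1 p.2 * ‖f p.2‖ ^ 2 + π p.1 * P p.1 p.2 * ‖f p.1‖ ^ 2 -
        2 * (conj ε * (((π p.1 * P p.1 p.2 : ℝ) : ℂ) * (conj (f p.1) * f p.2))).re := by
    intro p
    have hεsq : Complex.normSq ε = 1 := by rw [Complex.normSq_eq_norm_sq, hε, one_pow]
    simp only [Complex.sq_norm, Complex.normSq_sub, hεsq, map_mul]
    rw [show conj ε * (((π p.1 * P p.1 p.2 : ℝ) : ℂ) * (conj (f p.1) * f p.2)) =
      ((π p.1 * P p.1 p.2 : ℝ) : ℂ) * (f p.2 * (conj ε * conj (f p.1))) by ring,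
      Complex.re_ofReal_mul]
    ring
  simp only [hexpand]
  rw [show (0 : ℝ) = S + S - 2 * S by ring]
  exact ((hasSum_edge_snd hπ hP hProw hrev hsq hf).add
    (hasSum_edge_fst hπ hP hProw hsq hf)).sub (hcross.mul_left 2)

lemma eq_mul_of_P_pos (hπ : ∀ i, 0 < π i) (hP : ∀ i j, 0 ≤ P i j)
    (hProw : ∀ i, HasSum (P i) 1) (hrev : ∀ i j, π i * P i j = π j * P j i)
    {f : I → ℂ} {S : ℝ} (hf : HasSum (fun i => π i * ‖f i‖ ^ 2) S) {ε : ℂ} (hε : ‖ε‖ = 1)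
    (hharm : ∀ i, ∑' j, (P i j : ℂ) * f j = ε * f i) {i j : I} (hij : 0 < P i j) :
    f j = ε * f i := by
  have hπ0 : ∀ i, 0 ≤ π i := fun i => (hπ i).le
  have hle := le_hasSum (hasSum_edge_norm_sub_mul_sq hπ0 hP hProw hrev hf hε hharm) (i, j)
    fun p _ => mul_nonneg (mul_nonneg (hπ0 _) (hP _ _)) (sq_nonneg _)
  have hsq : ‖f j - ε * f i‖ ^ 2 ≤ 0 := nonpos_of_mul_nonpos_right hle (mul_pos (hπ i) hij)
  simpa [sub_eq_zero] using hsq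

end Dirichlet

lemma tsum_P_mul_div_eq {I : Type} {π : I → ℝ} (hπ : ∀ i, π i ≠ 0) {P : I → I → ℝ}
    (hrev : ∀ i j, π i * P i j = π j * P j i) (μ : I → ℂ) (i : I) :
    ∑' j, (P i j : ℂ) * (μ j / π j) = (∑' j, μ j * P j i) / π i := by
  rw [← tsum_div_const]
  refine tsum_congr fun j => ?_
  have hπi : (π i : ℂ) ≠ 0 := mod_cast hπ i
  have hπj : (π j : ℂ) ≠ 0 := mod_cast hπ j
  have hrevC : (π i : ℂ) * P i j = π j * P j i := mod_cast hrev i j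
  field_simp
  linear_combination μ j * hrevC

theorem div_eq_pow_mul_of_Ppow_pos {I : Type} [DecidableEq I] {π : I → ℝ} (hπ : ∀ i, 0 < π i)
    {P : I → I → ℝ} (hP : ∀ i j, 0 ≤ P i j) (hProw : ∀ i, HasSum (P i) 1)
    (hrev : ∀ i j, π i * P i j = π j * P j i) {μ : I → ℂ}
    (hμ : Summable fun i => ‖μ i‖ ^ 2 / π i) {ε : ℂ} (hε : ‖ε‖ = 1)
    (heig : ∀ j, ∑' i, μ i * (P i j : ℂ) = ε * μ j) {n : ℕ} {i j : I}
    (hn : 0 < Ppow P n i j) : μ j / π j = ε ^ n * (μ i / π i) := by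
  have hπ0 : ∀ i, π i ≠ 0 := fun i => (hπ i).ne'
  have hf : HasSum (fun i => π i * ‖μ i / π i‖ ^ 2) (∑' i, ‖μ i‖ ^ 2 / π i) := by
    refine hμ.hasSum.congr_fun fun i => ?_
    rw [norm_div, Complex.norm_real, Real.norm_of_nonneg (hπ i).le]
    field_simp [hπ0 i]
  have hharm : ∀ i, ∑' j, (P i j : ℂ) * (μ j / π j) = ε * (μ i / π i) := fun i => by
    rw [tsum_P_mul_div_eq hπ0 hrev, heig, mul_div_assoc]
  exact eq_pow_mul_of_Ppow_pos hP (fun i j hij => eq_mul_of_P_pos hπ hP hProw hrev hf hε hharm hij)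
    n i j hn

theorem stmt11_general (I : Type) [DecidableEq I]
    (π : I → ℝ) (hπpos : ∀ i, 0 < π i)
    (P : I → I → ℝ) (hPnn : ∀ i j, 0 ≤ P i j) (hProw : ∀ i, HasSum (P i) 1)
    (hirr : ∀ i j : I, ∃ n : ℕ, 1 ≤ n ∧ 0 < Ppow P n i j)
    (haper : ∀ i : I, ∀ d : ℕ, (∀ n : ℕ, 1 ≤ n → 0 < Ppow P n i i → d ∣ n) → d = 1)
    (hrev : ∀ i j, π i * P i j = π j * P j i) :
    (∀ μ : I → ℂ, Summable (fun i : I => ‖μ i‖ ^ 2 / π i) →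
      (∀ j : I, ∑' i : I, μ i * (P i j : ℂ) = -μ j) → ∀ i, μ i = 0) ∧
    (∀ μ : I → ℂ, Summable (fun i : I => ‖μ i‖ ^ 2 / π i) →
      (∀ j : I, ∑' i : I, μ i * (P i j : ℂ) = μ j) → ∃ c : ℂ, ∀ i, μ i = c * (π i : ℂ)) := by
  have hπ0 : ∀ i, (π i : ℂ) ≠ 0 := fun i => mod_cast (hπpos i).ne'
  refine ⟨fun μ hμ heig i => ?_, fun μ hμ heig => ?_⟩
  · obtain ⟨n, hn, hodd⟩ : ∃ n, 0 < Ppow P n i i ∧ Odd n := by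
      by_contra! h
      exact absurd (haper i 2 fun n _ hn => (Nat.not_odd_iff_even.1 (h n hn)).two_dvd) (by norm_num)
    have hflip := div_eq_pow_mul_of_Ppow_pos hπpos hPnn hProw hrev hμ (ε := -1) (by simp)
      (by simpa using heig) hn
    rw [hodd.neg_one_pow, neg_one_mul, CharZero.eq_neg_self_iff, div_eq_zero_iff] at hflip
    exact hflip.resolve_right (hπ0 i)
  · rcases isEmpty_or_nonempty I with hI | ⟨⟨i₀⟩⟩
    · exact ⟨0, fun i => isEmptyElim i⟩
    refine ⟨μ i₀ / π i₀, fun i => ?_⟩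
    obtain ⟨n, -, hn⟩ := hirr i₀ i
    have hconst := div_eq_pow_mul_of_Ppow_pos hπpos hPnn hProw hrev hμ (ε := 1) (by simp)
      (by simpa using heig) hn
    rwa [one_pow, one_mul, div_eq_iff (hπ0 i)] at hconst

/-- If `P` is an irreducible aperiodic row-stochastic matrix on a countable
set `I`, reversible with respect to a positive stationary probability distribution `π`, then as
an operator on `ℓ²(π)`: (a) `−1` is not an eigenvalue of `P`; (b) every `μ ∈ ℓ²(π)` fixed by
`P` is a scalar multiple of `π`. -/
theorem stmt11 (I : Type) [Countable I] [DecidableEq I]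
    (π : I → ℝ) (hπpos : ∀ i, 0 < π i) (hπ : HasSum π 1)
    (P : I → I → ℝ) (hPnn : ∀ i j, 0 ≤ P i j) (hProw : ∀ i, HasSum (P i) 1)
    (hirr : ∀ i j : I, ∃ n : ℕ, 1 ≤ n ∧ 0 < Ppow P n i j)
    (haper : ∀ i : I, ∀ d : ℕ, (∀ n : ℕ, 1 ≤ n → 0 < Ppow P n i i → d ∣ n) → d = 1)
    (hstat : ∀ j : I, HasSum (fun i : I => π i * P i j) (π j))
    (hrev : ∀ i j, π i * P i j = π j * P j i) :
    (∀ μ : I → ℂ, Summable (fun i : I => ‖μ i‖ ^ 2 / π i) →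
      (∀ j : I, ∑' i : I, μ i * (P i j : ℂ) = -μ j) → ∀ i, μ i = 0) ∧
    (∀ μ : I → ℂ, Summable (fun i : I => ‖μ i‖ ^ 2 / π i) →
      (∀ j : I, ∑' i : I, μ i * (P i j : ℂ) = μ j) → ∃ c : ℂ, ∀ i, μ i = c * (π i : ℂ)) :=
  stmt11_general I π hπpos P hPnn hProw hirr haper hrev
end
end

section
/- For every prime power q and every integer n ≥ 1, |‖δ₀P_sym^n − π_sym‖_tv − c_n·q^{−n}| ≤ (α(q)^{−2} − 1)^{1/2} · q^{−2n}, where c_n = 2qα(q)/(q²−1) if n is even and c_n = 2qα(q)/((q²−1)(q−1)) if n is odd. -/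
noncomputable section

/-- The tridiagonal transition matrix `P_sym` for the symmetric-matrix Markov chain. -/
def Psym (q : ℝ) (i j : ℕ) : ℝ :=
  if j = i + 1 then q⁻¹ ^ (i + 1)
  else if j = i then q⁻¹ ^ i - q⁻¹ ^ (i + 1)
  else if i = j + 1 then 1 - q⁻¹ ^ i
  else 0

/-- `α(q) = ∏_{i ≥ 1, i odd} (1 − q^{-i})`. -/
def alphaQ (q : ℝ) : ℝ := ∏' i : ℕ, (1 - q⁻¹ ^ (2 * i + 1))

/-- The stationary distribution `π_sym(k) = α(q)/∏_{i=1}^{k}(q^i − 1)`. -/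
def piSym (q : ℝ) (k : ℕ) : ℝ := alphaQ q / ∏ i ∈ Finset.range k, (q ^ (i + 1) - 1)

/-- The action `μ ↦ μP`, `(μP)(j) = Σ_i μ(i)P(i,j)`. -/
def applyP (P : ℕ → ℕ → ℝ) (μ : ℕ → ℝ) : ℕ → ℝ := fun j => ∑' i : ℕ, μ i * P i j

/-- `δ₀`. -/
def delta0 : ℕ → ℝ := fun i => if i = 0 then 1 else 0

/-!
Started at `0`, the chain has after `n` steps the law
`μₙ(k) = O(n-k) ∏_{n-k<j≤n} (1-q^{-j}) / ∏_{i≤k} (q^i-1)` for `k ≤ n` (and `0` beyond), where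
`O(m)` is the product of the `1-q^{-j}` over odd `j ≤ m`; one step of the chain preserves this form.
Regrouping the factors, `μₙ(k) = O(n) E / ∏_{i≤k} (q^i-1)` with `E` the product over the even
`j ∈ (n-k, n]`. Now `O(n) (1 - S) ≤ α = O(∞)`, where `S = ∑_{j odd, j>n} q^{-j}` is below every
`q^{-j}` with `j ≤ n`, so `μₙ(k) ≤ π(k)` for all `k ≥ 1` except `k = 1` with `n` odd. The distance
is therefore twice the total excess: `O(n) - α` at `0`, plus `(O(n) - α)/(q-1)` at `1` for odd
`n`. The Weierstrass product inequalities give `α S ≤ O(n) - α ≤ α S + S²`, and `2αS` (times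
`q/(q-1)` for odd `n`) is exactly `c_n q^{-n}`.
-/

open Finset Filter Topology

theorem one_sub_sum_le_prod_one_sub {ι : Type*} (s : Finset ι) {x : ι → ℝ}
    (h0 : ∀ i ∈ s, 0 ≤ x i) (h1 : ∀ i ∈ s, x i ≤ 1) :
    1 - ∑ i ∈ s, x i ≤ ∏ i ∈ s, (1 - x i) := by
  classical
  induction s using Finset.cons_induction with
  | empty => simp
  | cons a s _ ih =>
    simp only [mem_cons, forall_eq_or_imp] at h0 h1
    rw [sum_cons, prod_cons]
    have hP := ih h0.2 h1.2
    have hS : 0 ≤ ∑ i ∈ s, x i := sum_nonneg h0.2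
    nlinarith [mul_nonneg (sub_nonneg.2 h1.1) (sub_nonneg.2 hP), mul_nonneg h0.1 hS]

theorem prod_one_sub_mul_one_add_sum_le_one {ι : Type*} (s : Finset ι) {x : ι → ℝ}
    (h0 : ∀ i ∈ s, 0 ≤ x i) (h1 : ∀ i ∈ s, x i ≤ 1) :
    (∏ i ∈ s, (1 - x i)) * (1 + ∑ i ∈ s, x i) ≤ 1 := by
  classical
  induction s using Finset.cons_induction with
  | empty => simp
  | cons a s _ ih =>
    simp only [mem_cons, forall_eq_or_imp] at h0 h1
    rw [sum_cons, prod_cons]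
    have hP := ih h0.2 h1.2
    have hP0 : 0 ≤ ∏ i ∈ s, (1 - x i) := prod_nonneg fun i hi => sub_nonneg.2 (h1.2 i hi)
    have hS : 0 ≤ ∑ i ∈ s, x i := sum_nonneg h0.2
    nlinarith [mul_nonneg hP0 (mul_nonneg h0.1 hS), mul_nonneg hP0 (mul_nonneg h0.1 h0.1),
      mul_le_mul_of_nonneg_left hP (sub_nonneg.2 h1.1)]

theorem tsum_abs_eq_two_mul_sum {ι : Type*} {f : ι → ℝ} (s : Finset ι) (hf : Summable f)
    (h0 : ∑' i, f i = 0) (hs : ∀ i ∈ s, 0 ≤ f i) (hsc : ∀ i ∉ s, f i ≤ 0) :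
    ∑' i, |f i| = 2 * ∑ i ∈ s, f i := by
  have hpos : ∀ i ∉ s, max (f i) 0 = 0 := fun i hi => max_eq_right (hsc i hi)
  have habs : ∀ i, |f i| = 2 * max (f i) 0 - f i := fun i => by
    rcases le_total 0 (f i) with h | h
    · rw [abs_of_nonneg h, max_eq_left h]; ring
    · rw [abs_of_nonpos h, max_eq_right h]; ring
  rw [tsum_congr habs, ((summable_of_ne_finset_zero hpos).mul_left 2).tsum_sub hf, h0, sub_zero,
    tsum_mul_left, tsum_eq_sum hpos]
  exact congrArg _ (sum_congr rfl fun i hi => max_eq_left (hs i hi))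

namespace Psym

variable (q : ℝ)

def oddProd (M : ℕ) : ℝ := ∏ i ∈ range M, (1 - q⁻¹ ^ (2 * i + 1))

/-- `∑_{i ≥ M} q^{-(2i+1)}` in closed form. -/
def oddTail (M : ℕ) : ℝ := q⁻¹ ^ (2 * M + 1) / (1 - q⁻¹ ^ 2)

/-- The product of `1 - q^{-j}` over the odd `j ≤ m`. -/
def oddProdUpTo (m : ℕ) : ℝ := oddProd q ((m + 1) / 2)

/-- `∏_{a < j ≤ b} (1 - q^{-j})`; `evenPochIco` keeps only the even `j`. -/
def pochIco (a b : ℕ) : ℝ := ∏ i ∈ Ico a b, (1 - q⁻¹ ^ (i + 1))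

def evenPochIco (a b : ℕ) : ℝ :=
  ∏ i ∈ Ico a b, if (i + 1) % 2 = 0 then 1 - q⁻¹ ^ (i + 1) else 1

def denom (k : ℕ) : ℝ := ∏ i ∈ range k, (q ^ (i + 1) - 1)

def law (n k : ℕ) : ℝ :=
  if k ≤ n then oddProdUpTo q (n - k) * pochIco q (n - k) n / denom q k else 0

variable {q}

theorem oddProdUpTo_zero : oddProdUpTo q 0 = 1 := by simp [oddProdUpTo, oddProd]

theorem oddProdUpTo_succ_of_odd {m : ℕ} (h : (m + 1) % 2 = 1) :
    oddProdUpTo q (m + 1) = oddProdUpTo q m * (1 - q⁻¹ ^ (m + 1)) := by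
  rw [oddProdUpTo, oddProdUpTo, oddProd, oddProd, show (m + 1 + 1) / 2 = (m + 1) / 2 + 1 by omega,
    prod_range_succ, show 2 * ((m + 1) / 2) + 1 = m + 1 by omega]

theorem oddProdUpTo_succ_of_even {m : ℕ} (h : (m + 1) % 2 = 0) :
    oddProdUpTo q (m + 1) = oddProdUpTo q m := by
  rw [oddProdUpTo, oddProdUpTo, show (m + 1 + 1) / 2 = (m + 1) / 2 by omega]

theorem pochIco_self (a : ℕ) : pochIco q a a = 1 := by simp [pochIco]

theorem pochIco_succ_right {a b : ℕ} (h : a ≤ b) :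
    pochIco q a (b + 1) = pochIco q a b * (1 - q⁻¹ ^ (b + 1)) :=
  prod_Ico_succ_top h _

theorem pochIco_eq_mul_pochIco_succ {a b : ℕ} (h : a < b) :
    pochIco q a b = (1 - q⁻¹ ^ (a + 1)) * pochIco q (a + 1) b :=
  prod_eq_prod_Ico_succ_bot h _

theorem evenPochIco_self (a : ℕ) : evenPochIco q a a = 1 := by simp [evenPochIco]

theorem evenPochIco_succ_right {a b : ℕ} (h : a ≤ b) :
    evenPochIco q a (b + 1) =
      evenPochIco q a b * if (b + 1) % 2 = 0 then 1 - q⁻¹ ^ (b + 1) else 1 :=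
  prod_Ico_succ_top h _

theorem oddProdUpTo_mul_pochIco {a b : ℕ} (h : a ≤ b) :
    oddProdUpTo q a * pochIco q a b = oddProdUpTo q b * evenPochIco q a b := by
  induction b, h using Nat.le_induction with
  | base => rw [pochIco_self, evenPochIco_self]
  | succ b hb ih =>
    rw [pochIco_succ_right hb, evenPochIco_succ_right hb, ← mul_assoc, ih]
    rcases Nat.mod_two_eq_zero_or_one (b + 1) with h | h
    · rw [if_pos h, oddProdUpTo_succ_of_even h]; ring
    · rw [if_neg (by omega), oddProdUpTo_succ_of_odd h]; ring

theorem denom_zero : denom q 0 = 1 := by simp [denom]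

theorem denom_succ (k : ℕ) : denom q (k + 1) = denom q k * (q ^ (k + 1) - 1) :=
  prod_range_succ _ _

theorem denom_one : denom q 1 = q - 1 := by simp [denom]

theorem law_of_le {n k : ℕ} (h : k ≤ n) :
    law q n k = oddProdUpTo q (n - k) * pochIco q (n - k) n / denom q k :=
  if_pos h

theorem law_of_lt {n k : ℕ} (h : n < k) : law q n k = 0 := if_neg (by omega)

theorem law_zero_right (n : ℕ) : law q n 0 = oddProdUpTo q n := by
  simp [law, pochIco_self, denom_zero]

theorem law_eq_oddProdUpTo_mul_evenPochIco {n k : ℕ} (h : k ≤ n) :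
    law q n k = oddProdUpTo q n * evenPochIco q (n - k) n / denom q k := by
  rw [law_of_le h, oddProdUpTo_mul_pochIco (Nat.sub_le n k)]

section Positivity

variable (hq : 1 < q)
include hq

theorem one_sub_inv_pow_succ_pos (k : ℕ) : 0 < 1 - q⁻¹ ^ (k + 1) :=
  sub_pos.2 (pow_lt_one₀ (by positivity) (inv_lt_one_of_one_lt₀ hq) (by omega))

theorem one_sub_inv_pow_le_one (k : ℕ) : 1 - q⁻¹ ^ k ≤ 1 := by
  have : 0 ≤ q⁻¹ ^ k := by positivity
  linarith

theorem oddProd_pos (M : ℕ) : 0 < oddProd q M :=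
  prod_pos fun i _ => one_sub_inv_pow_succ_pos hq (2 * i)

theorem oddProd_le_one (M : ℕ) : oddProd q M ≤ 1 :=
  prod_le_one (fun i _ => (one_sub_inv_pow_succ_pos hq (2 * i)).le)
    fun _ _ => one_sub_inv_pow_le_one hq _

theorem pochIco_pos (a b : ℕ) : 0 < pochIco q a b :=
  prod_pos fun i _ => one_sub_inv_pow_succ_pos hq i

theorem pochIco_le_one (a b : ℕ) : pochIco q a b ≤ 1 :=
  prod_le_one (fun i _ => (one_sub_inv_pow_succ_pos hq i).le)
    fun _ _ => one_sub_inv_pow_le_one hq _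

theorem pow_le_pochIco {a b : ℕ} : (1 - q⁻¹ ^ (a + 1)) ^ (b - a) ≤ pochIco q a b := by
  rw [← Nat.card_Ico, ← prod_const]
  refine prod_le_prod (fun i _ => (one_sub_inv_pow_succ_pos hq a).le) fun i hi => ?_
  have := pow_le_pow_of_le_one (by positivity) (inv_le_one_of_one_le₀ hq.le)
    (Nat.add_le_add_right (mem_Ico.1 hi).1 1)
  linarith

theorem evenPochIco_le {a e b : ℕ} (hae : a ≤ e) (heb : e < b) (he : (e + 1) % 2 = 0) :
    evenPochIco q a b ≤ 1 - q⁻¹ ^ (e + 1) := by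
  have hfac : ∀ i ∈ (Ico a b).erase e,
      0 ≤ (if (i + 1) % 2 = 0 then 1 - q⁻¹ ^ (i + 1) else 1) ∧
        (if (i + 1) % 2 = 0 then 1 - q⁻¹ ^ (i + 1) else (1 : ℝ)) ≤ 1 := fun i _ => by
    split_ifs
    · exact ⟨(one_sub_inv_pow_succ_pos hq i).le, one_sub_inv_pow_le_one hq _⟩
    · norm_num
  rw [evenPochIco, ← mul_prod_erase _ _ (mem_Ico.2 ⟨hae, heb⟩), if_pos he]
  exact mul_le_of_le_one_right (one_sub_inv_pow_succ_pos hq e).le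
    (prod_le_one (fun i hi => (hfac i hi).1) fun i hi => (hfac i hi).2)

theorem denom_pos (k : ℕ) : 0 < denom q k :=
  prod_pos fun i _ => sub_pos.2 (one_lt_pow₀ hq (by omega))

theorem law_nonneg (n k : ℕ) : 0 ≤ law q n k := by
  unfold law
  split_ifs
  · have := oddProd_pos hq ((n - k + 1) / 2)
    have := pochIco_pos hq (n - k) n
    have := denom_pos hq k
    unfold oddProdUpTo
    positivity
  · exact le_rfl

theorem law_le_inv_denom (n k : ℕ) : law q n k ≤ (denom q k)⁻¹ := by
  rcases le_or_gt k n with h | h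
  · rw [law_of_le h, div_eq_mul_inv]
    exact mul_le_of_le_one_left (inv_pos.2 (denom_pos hq k)).le
      (mul_le_one₀ (oddProd_le_one hq _) (pochIco_pos hq _ _).le (pochIco_le_one hq _ _))
  · rw [law_of_lt h]
    exact (inv_pos.2 (denom_pos hq k)).le

end Positivity

theorem eq_zero {i j : ℕ} (h₁ : j ≠ i + 1) (h₂ : j ≠ i) (h₃ : i ≠ j + 1) : Psym q i j = 0 := by
  simp [Psym, h₁, h₂, h₃]

theorem apply_succ_right (i : ℕ) : Psym q i (i + 1) = q⁻¹ ^ (i + 1) := by simp [Psym]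

theorem apply_self (i : ℕ) : Psym q i i = q⁻¹ ^ i - q⁻¹ ^ (i + 1) := by simp [Psym]

theorem apply_succ_left (j : ℕ) : Psym q (j + 1) j = 1 - q⁻¹ ^ (j + 1) := by
  rw [Psym, if_neg (by omega), if_neg (by omega), if_pos rfl]

theorem sum_range_add_two (i : ℕ) : ∑ j ∈ range (i + 2), Psym q i j = 1 := by
  rcases i with _ | m
  · simp [sum_range_succ, Psym]
  · rw [sum_range_succ, sum_range_succ, sum_range_succ,
      sum_eq_zero fun j hj => eq_zero (by simp at hj; omega) (by simp at hj; omega)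
        (by simp at hj; omega), apply_succ_left, apply_self, apply_succ_right]
    ring

theorem applyP_zero (μ : ℕ → ℝ) : applyP (Psym q) μ 0 = (μ 0 + μ 1) * (1 - q⁻¹) := by
  rw [applyP, tsum_eq_sum (s := range 2) fun i hi => by
    rw [eq_zero (by simp at hi; omega) (by simp at hi; omega) (by simp at hi; omega), mul_zero]]
  rw [sum_range_succ, sum_range_one, apply_self, apply_succ_left]
  ring

theorem applyP_succ (μ : ℕ → ℝ) (m : ℕ) :
    applyP (Psym q) μ (m + 1) =
      μ m * q⁻¹ ^ (m + 1) + μ (m + 1) * (q⁻¹ ^ (m + 1) - q⁻¹ ^ (m + 2))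
        + μ (m + 2) * (1 - q⁻¹ ^ (m + 2)) := by
  rw [applyP, tsum_eq_sum (s := Ico m (m + 3)) fun i hi => by
    rw [eq_zero (by simp at hi; omega) (by simp at hi; omega) (by simp at hi; omega), mul_zero]]
  rw [sum_Ico_eq_sum_range, Nat.add_sub_cancel_left]
  simp only [sum_range_succ, sum_range_zero, zero_add, add_zero]
  rw [apply_succ_right, apply_self, apply_succ_left]

theorem sum_applyP {μ : ℕ → ℝ} {N : ℕ} (hμ : ∀ i, N ≤ i → μ i = 0) :
    ∑ j ∈ range (N + 1), applyP (Psym q) μ j = ∑ i ∈ range N, μ i := by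
  have hfin : ∀ j, applyP (Psym q) μ j = ∑ i ∈ range N, μ i * Psym q i j := fun j =>
    tsum_eq_sum fun i hi => by rw [hμ i (by simpa using hi), zero_mul]
  simp only [hfin]
  rw [sum_comm]
  refine sum_congr rfl fun i hi => ?_
  rw [← mul_sum, ← sum_subset (range_subset_range.2 (by simp at hi; omega : i + 2 ≤ N + 1))
    fun j _ hj => eq_zero (by simp at hj; omega) (by simp at hj; omega) (by simp at hj; omega),
    sum_range_add_two, mul_one]

theorem summable_law (n : ℕ) : Summable (law q n) :=
  summable_of_ne_finset_zero (s := range (n + 1)) fun k hk => law_of_lt (by simpa using hk)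

section Law

variable (hq : 1 < q)
include hq

theorem applyP_law_zero (n : ℕ) : applyP (Psym q) (law q n) 0 = law q (n + 1) 0 := by
  have hq0 : q ≠ 0 := by positivity
  have hq1 : q - 1 ≠ 0 := sub_ne_zero.2 hq.ne'
  rw [applyP_zero, law_zero_right, law_zero_right]
  rcases n with _ | m
  · rw [law_of_lt zero_lt_one, oddProdUpTo_succ_of_odd (by norm_num), oddProdUpTo_zero]
    ring
  rw [law_of_le (by omega : 1 ≤ m + 1), Nat.add_sub_cancel,
    pochIco_eq_mul_pochIco_succ (Nat.lt_succ_self m), pochIco_self, denom_one]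
  rcases Nat.mod_two_eq_zero_or_one (m + 1) with h | h
  · rw [oddProdUpTo_succ_of_odd (by omega : (m + 1 + 1) % 2 = 1), oddProdUpTo_succ_of_even h]
    simp only [inv_pow]
    field_simp
    ring
  · rw [oddProdUpTo_succ_of_even (by omega : (m + 1 + 1) % 2 = 0), oddProdUpTo_succ_of_odd h]
    simp only [inv_pow]
    field_simp
    ring

theorem applyP_law_succ_self (n : ℕ) :
    applyP (Psym q) (law q n) (n + 1) = law q (n + 1) (n + 1) := by
  have hD := (denom_pos hq n).ne'
  have hP : q ^ (n + 1) - 1 ≠ 0 := (sub_pos.2 (one_lt_pow₀ hq (by omega))).ne'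
  rw [applyP_succ, law_of_le le_rfl, law_of_lt (Nat.lt_succ_self n), law_of_lt (by omega),
    law_of_le le_rfl, Nat.sub_self, Nat.sub_self, oddProdUpTo_zero,
    pochIco_succ_right (Nat.zero_le n), denom_succ]
  simp only [inv_pow]
  field_simp
  ring

theorem applyP_law_self (m : ℕ) :
    applyP (Psym q) (law q (m + 1)) (m + 1) = law q (m + 2) (m + 1) := by
  have hD := (denom_pos hq m).ne'
  have hP : q ^ (m + 1) - 1 ≠ 0 := (sub_pos.2 (one_lt_pow₀ hq (by omega))).ne'
  rw [applyP_succ, law_of_le (Nat.le_succ m), law_of_le le_rfl, law_of_lt (by omega),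
    law_of_le (by omega), Nat.sub_self, show m + 1 - m = 1 by omega,
    show m + 2 - (m + 1) = 1 by omega, oddProdUpTo_zero,
    oddProdUpTo_succ_of_odd (by norm_num), oddProdUpTo_zero,
    pochIco_eq_mul_pochIco_succ (by omega : 0 < m + 1), pochIco_succ_right (by omega : 1 ≤ m + 1),
    denom_succ]
  simp only [zero_add, pow_one, inv_pow]
  field_simp
  ring

theorem applyP_law_of_lt (m b : ℕ) :
    applyP (Psym q) (law q (m + 2 + b)) (m + 1) = law q (m + 2 + b + 1) (m + 1) := by
  have hD := (denom_pos hq m).ne'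
  have hP₁ : q ^ (m + 1) - 1 ≠ 0 := (sub_pos.2 (one_lt_pow₀ hq (by omega))).ne'
  have hP₂ : q ^ (m + 2) - 1 ≠ 0 := (sub_pos.2 (one_lt_pow₀ hq (by omega))).ne'
  have hI := (pochIco_pos hq (b + 2) (m + 2 + b)).ne'
  rw [applyP_succ, law_of_le (by omega), law_of_le (by omega), law_of_le (by omega),
    law_of_le (by omega), show m + 2 + b - m = b + 2 by omega,
    show m + 2 + b - (m + 1) = b + 1 by omega, show m + 2 + b - (m + 2) = b by omega,
    show m + 2 + b + 1 - (m + 1) = b + 2 by omega,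
    pochIco_eq_mul_pochIco_succ (by omega : b + 1 < m + 2 + b),
    pochIco_eq_mul_pochIco_succ (by omega : b < m + 2 + b),
    pochIco_eq_mul_pochIco_succ (by omega : b + 1 < m + 2 + b),
    pochIco_succ_right (by omega : b + 2 ≤ m + 2 + b),
    denom_succ (m + 1), denom_succ m]
  rcases Nat.mod_two_eq_zero_or_one (b + 1) with h | h
  · rw [oddProdUpTo_succ_of_odd (by omega : (b + 1 + 1) % 2 = 1), oddProdUpTo_succ_of_even h]
    simp only [inv_pow]
    field_simp
    ring
  · rw [oddProdUpTo_succ_of_even (by omega : (b + 1 + 1) % 2 = 0), oddProdUpTo_succ_of_odd h]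
    simp only [inv_pow]
    field_simp
    ring

theorem applyP_law (n : ℕ) : applyP (Psym q) (law q n) = law q (n + 1) := by
  funext j
  rcases j with _ | m
  · exact applyP_law_zero hq n
  rcases lt_trichotomy (m + 1) n with h | rfl | h
  · obtain ⟨b, rfl⟩ : ∃ b, n = m + 2 + b := ⟨n - (m + 2), by omega⟩
    exact applyP_law_of_lt hq m b
  · exact applyP_law_self hq m
  · rcases Nat.lt_or_ge n m with h' | h'
    · rw [applyP_succ, law_of_lt h', law_of_lt (by omega), law_of_lt (by omega),
        law_of_lt (by omega)]
      ring
    · obtain rfl : m = n := by omega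
      exact applyP_law_succ_self hq m

theorem iterate_applyP_delta0 (n : ℕ) : (applyP (Psym q))^[n] delta0 = law q n := by
  induction n with
  | zero =>
    funext k
    rcases k with _ | k
    · simp [delta0, law_zero_right, oddProdUpTo_zero]
    · simp [delta0, law_of_lt]
  | succ n ih => rw [Function.iterate_succ_apply', ih, applyP_law hq]

theorem sum_law (n : ℕ) : ∑ k ∈ range (n + 1), law q n k = 1 := by
  induction n with
  | zero => simp [law_zero_right, oddProdUpTo_zero]
  | succ n ih => rw [← applyP_law hq, sum_applyP fun i hi => law_of_lt (by omega), ih]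

theorem tsum_law (n : ℕ) : ∑' k, law q n k = 1 := by
  rw [tsum_eq_sum (s := range (n + 1)) fun k hk => law_of_lt (by simpa using hk), sum_law hq]

end Law

theorem oddProd_add (M K : ℕ) :
    oddProd q (M + K) = oddProd q M * ∏ i ∈ range K, (1 - q⁻¹ ^ (2 * (M + i) + 1)) :=
  prod_range_add _ _ _

theorem piSym_eq_div (k : ℕ) : piSym q k = alphaQ q / denom q k := rfl

section Limits

variable (hq : 1 < q)
include hq

theorem hasSum_oddTail (M : ℕ) :
    HasSum (fun i : ℕ => q⁻¹ ^ (2 * (M + i) + 1)) (oddTail q M) := by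
  have ht : q⁻¹ ^ 2 < 1 := pow_lt_one₀ (by positivity) (inv_lt_one_of_one_lt₀ hq) two_ne_zero
  have hf : (fun i : ℕ => q⁻¹ ^ (2 * (M + i) + 1)) =
      fun i => q⁻¹ ^ (2 * M + 1) * (q⁻¹ ^ 2) ^ i := by
    ext i
    ring
  rw [hf, oddTail, div_eq_mul_inv]
  exact (hasSum_geometric_of_lt_one (by positivity) ht).mul_left _

theorem oddTail_nonneg (M : ℕ) : 0 ≤ oddTail q M :=
  (hasSum_oddTail hq M).nonneg fun _ => by positivity

theorem multipliable_one_sub_inv_pow_odd : Multipliable fun i : ℕ => 1 - q⁻¹ ^ (2 * i + 1) := by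
  simpa [sub_eq_add_neg] using
    Real.multipliable_one_add_of_summable (hasSum_oddTail hq 0).summable.neg

theorem tendsto_oddProd : Tendsto (oddProd q) atTop (𝓝 (alphaQ q)) :=
  (multipliable_one_sub_inv_pow_odd hq).hasProd.tendsto_prod_nat

theorem tendsto_oddProdUpTo : Tendsto (oddProdUpTo q) atTop (𝓝 (alphaQ q)) :=
  (tendsto_oddProd hq).comp <| tendsto_atTop_atTop.2 fun b => ⟨2 * b, fun n hn => by omega⟩

theorem alphaQ_pos : 0 < alphaQ q := by
  have hlog := Real.summable_log_one_add_of_summable (hasSum_oddTail hq 0).summable.neg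
  rw [alphaQ, ← Real.rexp_tsum_eq_tprod (fun i => one_sub_inv_pow_succ_pos hq (2 * i))
    (by simpa [sub_eq_add_neg] using hlog)]
  positivity

theorem oddProd_mul_one_sub_oddTail_le (M : ℕ) : oddProd q M * (1 - oddTail q M) ≤ alphaQ q := by
  refine ge_of_tendsto ((tendsto_oddProd hq).comp (tendsto_add_atTop_nat M))
    (Eventually.of_forall fun K => ?_)
  have hG := (oddProd_pos hq M).le
  calc oddProd q M * (1 - oddTail q M)
      ≤ oddProd q M * (1 - ∑ i ∈ range K, q⁻¹ ^ (2 * (M + i) + 1)) := by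
        gcongr
        exact sum_le_hasSum _ (fun _ _ => by positivity) (hasSum_oddTail hq M)
    _ ≤ oddProd q M * ∏ i ∈ range K, (1 - q⁻¹ ^ (2 * (M + i) + 1)) := by
        gcongr
        exact one_sub_sum_le_prod_one_sub _ (fun _ _ => by positivity)
          fun _ _ => pow_le_one₀ (by positivity) (inv_le_one_of_one_le₀ hq.le)
    _ = oddProd q (K + M) := by rw [add_comm, oddProd_add]

theorem alphaQ_mul_one_add_oddTail_le (M : ℕ) :
    alphaQ q * (1 + oddTail q M) ≤ oddProd q M := by
  refine le_of_tendsto (((tendsto_oddProd hq).comp (tendsto_add_atTop_nat M)).mul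
    (tendsto_const_nhds.add (hasSum_oddTail hq M).tendsto_sum_nat))
    (Eventually.of_forall fun K => ?_)
  rw [Function.comp_apply, add_comm K M, oddProd_add, mul_assoc]
  exact mul_le_of_le_one_right (oddProd_pos hq M).le
    (prod_one_sub_mul_one_add_sum_le_one _ (fun _ _ => by positivity)
      fun _ _ => pow_le_one₀ (by positivity) (inv_le_one_of_one_le₀ hq.le))

theorem alphaQ_le_oddProd (M : ℕ) : alphaQ q ≤ oddProd q M :=
  (le_mul_of_one_le_right (alphaQ_pos hq).le (by linarith [oddTail_nonneg hq M])).trans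
    (alphaQ_mul_one_add_oddTail_le hq M)

theorem alphaQ_le_one_sub_inv : alphaQ q ≤ 1 - q⁻¹ := by
  simpa [oddProd] using alphaQ_le_oddProd hq 1

theorem oddProd_sub_alphaQ_sub_le (M : ℕ) :
    oddProd q M - alphaQ q - alphaQ q * oddTail q M ≤ oddTail q M ^ 2 := by
  have hA := oddProd_mul_one_sub_oddTail_le hq M
  have hS := oddTail_nonneg hq M
  calc oddProd q M - alphaQ q - alphaQ q * oddTail q M
      ≤ oddTail q M * (oddProd q M - alphaQ q) := by nlinarith
    _ ≤ oddTail q M * (oddProd q M * oddTail q M) := by gcongr; linarith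
    _ = oddProd q M * oddTail q M ^ 2 := by ring
    _ ≤ oddTail q M ^ 2 := mul_le_of_le_one_left (sq_nonneg _) (oddProd_le_one hq M)

theorem summable_inv_denom : Summable fun k => (denom q k)⁻¹ := by
  refine summable_of_ratio_test_tendsto_lt_one zero_lt_one
    (Eventually.of_forall fun k => (inv_pos.2 (denom_pos hq k)).ne') ?_
  have hpow : Tendsto (fun k : ℕ => q ^ (k + 1) - 1) atTop atTop :=
    tendsto_atTop_add_const_right _ (-1)
      ((tendsto_pow_atTop_atTop_of_one_lt hq).comp (tendsto_add_atTop_nat 1))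
  refine hpow.inv_tendsto_atTop.congr fun k => ?_
  have hD := denom_pos hq k
  have hP : 0 < q ^ (k + 1) - 1 := sub_pos.2 (one_lt_pow₀ hq (by omega))
  rw [denom_succ, norm_inv, norm_inv, Real.norm_of_nonneg (by positivity),
    Real.norm_of_nonneg hD.le, Pi.inv_apply]
  field_simp

theorem summable_piSym : Summable (piSym q) :=
  (summable_inv_denom hq).mul_left (alphaQ q)

theorem tendsto_law (k : ℕ) : Tendsto (fun n => law q n k) atTop (𝓝 (piSym q k)) := by
  have hpow : Tendsto (fun n => q⁻¹ ^ (n - k + 1)) atTop (𝓝 0) :=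
    ((tendsto_pow_atTop_nhds_zero_of_lt_one (by positivity) (inv_lt_one_of_one_lt₀ hq)).comp
      (tendsto_add_atTop_nat 1)).comp (tendsto_sub_atTop_nat k)
  have hI : Tendsto (fun n => pochIco q (n - k) n) atTop (𝓝 1) := by
    refine tendsto_of_tendsto_of_tendsto_of_le_of_le' (g := fun n => (1 - q⁻¹ ^ (n - k + 1)) ^ k)
      (by simpa using ((tendsto_const_nhds (x := (1 : ℝ))).sub hpow).pow k) tendsto_const_nhds ?_
      (Eventually.of_forall fun n => pochIco_le_one hq _ _)
    filter_upwards [eventually_ge_atTop k] with n hn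
    simpa [Nat.sub_sub_self hn] using pow_le_pochIco hq (a := n - k) (b := n)
  have hlim := (((tendsto_oddProdUpTo hq).comp (tendsto_sub_atTop_nat k)).mul hI).div_const
    (denom q k)
  rw [mul_one] at hlim
  refine hlim.congr' ?_
  filter_upwards [eventually_ge_atTop k] with n hn
  exact (law_of_le hn).symm

theorem tsum_piSym : ∑' k, piSym q k = 1 := by
  have hlim := tendsto_tsum_of_dominated_convergence (summable_inv_denom hq) (tendsto_law hq)
    (Eventually.of_forall fun n k => by
      rw [Real.norm_of_nonneg (law_nonneg hq n k)]
      exact law_le_inv_denom hq n k)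
  simp only [tsum_law hq] at hlim
  exact tendsto_nhds_unique hlim tendsto_const_nhds

end Limits

variable (q) in
/-- For odd `n` the state `1` also carries excess mass, `1/(q-1)` times that of the state `0`. -/
def parityWeight (n : ℕ) : ℝ := if n % 2 = 0 then 1 else q / (q - 1)

theorem parityWeight_nonneg (hq : 1 < q) (n : ℕ) : 0 ≤ parityWeight q n := by
  unfold parityWeight
  split_ifs
  · exact zero_le_one
  · exact div_nonneg (by linarith) (by linarith)

theorem mainTerm_eq (hq : 1 < q) (n : ℕ) :
    (if n % 2 = 0 then 2 * q * alphaQ q / (q ^ 2 - 1)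
      else 2 * q * alphaQ q / ((q ^ 2 - 1) * (q - 1))) * q⁻¹ ^ n
      = 2 * parityWeight q n * alphaQ q * oddTail q ((n + 1) / 2) := by
  have hq0 : q ≠ 0 := by positivity
  have hq1 : q - 1 ≠ 0 := sub_ne_zero.2 hq.ne'
  have hq2 : q ^ 2 - 1 ≠ 0 := (sub_pos.2 (one_lt_pow₀ hq two_ne_zero)).ne'
  unfold parityWeight oddTail
  split_ifs with h
  · rw [show 2 * ((n + 1) / 2) + 1 = n + 1 by omega]
    simp only [inv_pow]
    field_simp
    ring
  · rw [show 2 * ((n + 1) / 2) + 1 = n + 2 by omega]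
    simp only [inv_pow]
    field_simp
    ring

theorem law_one_sub_piSym_one_of_odd {n : ℕ} (hn : n % 2 = 1) :
    law q n 1 - piSym q 1 = (oddProdUpTo q n - alphaQ q) / (q - 1) := by
  obtain ⟨m, rfl⟩ : ∃ m, n = m + 1 := ⟨n - 1, by omega⟩
  rw [law_of_le (by omega), Nat.add_sub_cancel, pochIco_eq_mul_pochIco_succ (Nat.lt_succ_self m),
    pochIco_self, oddProdUpTo_succ_of_odd hn, piSym_eq_div, denom_one]
  ring

section Quantitative

variable (hq : 2 ≤ q)
include hq

theorem inv_le_half : q⁻¹ ≤ 1 / 2 := by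
  rw [one_div]
  exact inv_anti₀ two_pos hq

theorem oddTail_le (M : ℕ) : oddTail q M ≤ 4 / 3 * q⁻¹ ^ (2 * M + 1) := by
  have ht := inv_le_half hq
  have ht0 : 0 < q⁻¹ := by positivity
  have hsq : 3 / 4 ≤ 1 - q⁻¹ ^ 2 := by nlinarith
  have hpow : 0 ≤ q⁻¹ ^ (2 * M + 1) := by positivity
  rw [oddTail, div_le_iff₀ (by linarith)]
  nlinarith

theorem oddTail_le_inv_pow (M : ℕ) : oddTail q M ≤ q⁻¹ ^ (2 * M) := by
  have hpow : 0 ≤ q⁻¹ ^ (2 * M) := by positivity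
  calc oddTail q M ≤ 4 / 3 * q⁻¹ ^ (2 * M + 1) := oddTail_le hq M
    _ = q⁻¹ ^ (2 * M) * (4 / 3 * q⁻¹) := by ring
    _ ≤ q⁻¹ ^ (2 * M) * 1 := by gcongr; linarith [inv_le_half hq]
    _ = q⁻¹ ^ (2 * M) := mul_one _

theorem law_le_piSym {n k : ℕ} (hk : 1 ≤ k) (hkn : k ≤ n) (h : n % 2 = 0 ∨ 2 ≤ k) :
    law q n k ≤ piSym q k := by
  have hq1 : 1 < q := by linarith
  rw [law_eq_oddProdUpTo_mul_evenPochIco hkn, piSym_eq_div,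
    div_le_div_iff_of_pos_right (denom_pos hq1 k)]
  -- `2 * (n / 2)`, the largest even number `≤ n`, lies in `(n - k, n]`
  have hE := evenPochIco_le hq1 (a := n - k) (e := 2 * (n / 2) - 1) (b := n)
    (by omega) (by omega) (by omega)
  have hS : oddTail q ((n + 1) / 2) ≤ q⁻¹ ^ (2 * (n / 2) - 1 + 1) :=
    (oddTail_le_inv_pow hq _).trans
      (pow_le_pow_of_le_one (by positivity) (inv_le_one_of_one_le₀ hq1.le) (by omega))
  calc oddProdUpTo q n * evenPochIco q (n - k) n
      ≤ oddProd q ((n + 1) / 2) * (1 - oddTail q ((n + 1) / 2)) :=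
        mul_le_mul_of_nonneg_left (by linarith) (oddProd_pos hq1 _).le
    _ ≤ alphaQ q := oddProd_mul_one_sub_oddTail_le hq1 _

theorem tsum_abs_law_sub_piSym (n : ℕ) :
    ∑' k, |law q n k - piSym q k| = 2 * parityWeight q n * (oddProdUpTo q n - alphaQ q) := by
  have hq1 : 1 < q := by linarith
  have hf : Summable fun k => law q n k - piSym q k := (summable_law n).sub (summable_piSym hq1)
  have h0 : ∑' k, (law q n k - piSym q k) = 0 := by
    rw [(summable_law n).tsum_sub (summable_piSym hq1), tsum_law hq1, tsum_piSym hq1, sub_self]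
  have hneg : ∀ k, 2 ≤ k ∨ (k = 1 ∧ n % 2 = 0) → law q n k - piSym q k ≤ 0 := by
    intro k hk
    rcases le_or_gt k n with hkn | hkn
    · linarith [law_le_piSym hq (by omega) hkn (by omega)]
    · rw [law_of_lt hkn, zero_sub, neg_nonpos, piSym_eq_div]
      exact div_nonneg (alphaQ_pos hq1).le (denom_pos hq1 k).le
  have hzero : law q n 0 - piSym q 0 = oddProdUpTo q n - alphaQ q := by
    rw [law_zero_right, piSym_eq_div, denom_zero, div_one]
  have hexcess : 0 ≤ oddProdUpTo q n - alphaQ q := sub_nonneg.2 (alphaQ_le_oddProd hq1 _)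
  rcases Nat.mod_two_eq_zero_or_one n with h | h
  · rw [tsum_abs_eq_two_mul_sum {0} hf h0
      (fun k hk => by rw [mem_singleton.1 hk, hzero]; exact hexcess)
      fun k hk => hneg k (by simp at hk; omega), sum_singleton, hzero, parityWeight, if_pos h,
      mul_one]
  · have hone := law_one_sub_piSym_one_of_odd (q := q) h
    have hpos : ∀ k ∈ ({0, 1} : Finset ℕ), 0 ≤ law q n k - piSym q k := by
      simp only [mem_insert, mem_singleton, forall_eq_or_imp, forall_eq, hzero, hone]
      exact ⟨hexcess, div_nonneg hexcess (by linarith)⟩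
    rw [tsum_abs_eq_two_mul_sum {0, 1} hf h0 hpos fun k hk => hneg k (by simp at hk; omega),
      sum_pair zero_ne_one, hzero, hone, parityWeight, if_neg (by omega)]
    have : q - 1 ≠ 0 := by linarith
    field_simp
    ring

theorem parityWeight_mul_inv_pow_le (n : ℕ) :
    parityWeight q n * q⁻¹ ^ (4 * ((n + 1) / 2) + 2) ≤ q⁻¹ ^ (2 * n + 2) := by
  unfold parityWeight
  split_ifs with h
  · rw [one_mul, show 4 * ((n + 1) / 2) + 2 = 2 * n + 2 by omega]
  · have hq0 : q ≠ 0 := by positivity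
    have hq1 : q - 1 ≠ 0 := by linarith
    have hw : q / (q - 1) * q⁻¹ ^ 2 ≤ 1 := by
      rw [show q / (q - 1) * q⁻¹ ^ 2 = (q * (q - 1))⁻¹ by field_simp]
      exact inv_le_one_of_one_le₀ (by nlinarith)
    calc q / (q - 1) * q⁻¹ ^ (4 * ((n + 1) / 2) + 2)
        = q⁻¹ ^ (2 * n + 2) * (q / (q - 1) * q⁻¹ ^ 2) := by
          rw [show 4 * ((n + 1) / 2) + 2 = 2 * n + 2 + 2 by omega, pow_add]
          ring
      _ ≤ q⁻¹ ^ (2 * n + 2) := mul_le_of_le_one_right (by positivity) hw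

theorem le_sqrt_inv_alphaQ_sq_sub_one : 32 / 9 * q⁻¹ ^ 2 ≤ Real.sqrt ((alphaQ q)⁻¹ ^ 2 - 1) := by
  have hq1 : 1 < q := by linarith
  have hα := alphaQ_pos hq1
  have hα' := alphaQ_le_one_sub_inv hq1
  have ht := inv_le_half hq
  set t := q⁻¹
  have ht0 : 0 < t := by positivity
  rw [Real.le_sqrt' (by positivity)]
  -- `α⁻² - 1 ≥ (1 - t)⁻² - 1 ≥ 2 t ≥ (32/9)² t⁴`
  have h1 : 1 + 2 * t ≤ ((1 - t) ^ 2)⁻¹ := by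
    rw [inv_eq_one_div, le_div_iff₀ (by nlinarith)]
    nlinarith [mul_nonneg (sq_nonneg t) (by linarith : (0 : ℝ) ≤ 3 - 2 * t)]
  have h2 : ((1 - t) ^ 2)⁻¹ ≤ (alphaQ q)⁻¹ ^ 2 := by
    rw [inv_pow]
    exact inv_anti₀ (by positivity) (pow_le_pow_left₀ hα.le hα' 2)
  have h3 : t ^ 3 ≤ (1 / 2) ^ 3 := pow_le_pow_left₀ ht0.le ht 3
  nlinarith [mul_le_mul_of_nonneg_left h3 ht0.le]

end Quantitative

end Psym

open Psym

theorem stmt13_general (q : ℕ) (hq : IsPrimePow q) (n : ℕ) :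
    |(∑' i : ℕ, |(applyP (Psym q))^[n] delta0 i - piSym q i|)
        - (if n % 2 = 0 then 2 * (q : ℝ) * alphaQ q / ((q : ℝ) ^ 2 - 1)
           else 2 * (q : ℝ) * alphaQ q / (((q : ℝ) ^ 2 - 1) * ((q : ℝ) - 1))) * (q : ℝ)⁻¹ ^ n|
      ≤ Real.sqrt ((alphaQ q)⁻¹ ^ 2 - 1) * (q : ℝ)⁻¹ ^ (2 * n) := by
  have hq2 : (2 : ℝ) ≤ q := by exact_mod_cast hq.two_le
  have hq1 : (1 : ℝ) < q := by linarith
  rw [iterate_applyP_delta0 hq1, tsum_abs_law_sub_piSym hq2 n, mainTerm_eq hq1]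
  set M := (n + 1) / 2
  set w := parityWeight (q : ℝ) n
  set S := oddTail (q : ℝ) M
  have hA : alphaQ q * (1 + S) ≤ oddProdUpTo q n := alphaQ_mul_one_add_oddTail_le hq1 M
  have hB : oddProdUpTo q n - alphaQ q - alphaQ q * S ≤ S ^ 2 := oddProd_sub_alphaQ_sub_le hq1 M
  have hw := parityWeight_nonneg hq1 n
  calc |2 * w * (oddProdUpTo q n - alphaQ q) - 2 * w * alphaQ q * S|
      = 2 * w * (oddProdUpTo q n - alphaQ q - alphaQ q * S) := by
        rw [abs_of_nonneg (by nlinarith)]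
        ring
    _ ≤ 2 * w * (4 / 3 * (q : ℝ)⁻¹ ^ (2 * M + 1)) ^ 2 := by
        gcongr
        exact hB.trans (pow_le_pow_left₀ (oddTail_nonneg hq1 M) (oddTail_le hq2 M) 2)
    _ = 32 / 9 * (w * (q : ℝ)⁻¹ ^ (4 * M + 2)) := by ring
    _ ≤ 32 / 9 * (q : ℝ)⁻¹ ^ 2 * (q : ℝ)⁻¹ ^ (2 * n) := by
        rw [mul_assoc, ← pow_add, show 2 + 2 * n = 2 * n + 2 by ring]
        gcongr
        exact parityWeight_mul_inv_pow_le hq2 n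
    _ ≤ Real.sqrt ((alphaQ q)⁻¹ ^ 2 - 1) * (q : ℝ)⁻¹ ^ (2 * n) := by
        gcongr
        exact le_sqrt_inv_alphaQ_sq_sub_one hq2

/-- For every prime power `q` and `n ≥ 1`,
`|‖δ₀P_sym^n − π_sym‖_tv − c_n·q^{−n}| ≤ (α(q)^{−2} − 1)^{1/2}·q^{−2n}` with
`c_n = 2qα(q)/(q²−1)` for even `n` and `c_n = 2qα(q)/((q²−1)(q−1))` for odd `n`. -/
theorem stmt13 (q : ℕ) (hq : IsPrimePow q) (n : ℕ) (hn : 1 ≤ n) :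
    |(∑' i : ℕ, |(applyP (Psym q))^[n] delta0 i - piSym q i|)
        - (if n % 2 = 0 then 2 * (q : ℝ) * alphaQ q / ((q : ℝ) ^ 2 - 1)
           else 2 * (q : ℝ) * alphaQ q / (((q : ℝ) ^ 2 - 1) * ((q : ℝ) - 1))) * (q : ℝ)⁻¹ ^ n|
      ≤ Real.sqrt ((alphaQ q)⁻¹ ^ 2 - 1) * (q : ℝ)⁻¹ ^ (2 * n) :=
  stmt13_general q hq n
end
end

section
/- For every real number q > 1 (in particular for every prime power q), with α(q) := ∏_{i≥1, i odd}(1 − q^{−i}) and π_sym(k) := α(q)/∏_{i=1}^{k}(q^i − 1), the following moment identities hold: Σ_{k=0}^{∞} π_sym(k) = 1, Σ_{k=0}^{∞} π_sym(k)·q^k = 2, and Σ_{k=0}^{∞} π_sym(k)·q^{2k} = 2 + 2q. Equivalently: Σ_{k=0}^{∞} 1/∏_{i=1}^{k}(q^i−1) = α(q)^{−1}, Σ_{k=0}^{∞} q^k/∏_{i=1}^{k}(q^i−1) = 2·α(q)^{−1}, and Σ_{k=0}^{∞} q^{2k}/∏_{i=1}^{k}(q^i−1) = (2+2q)·α(q)^{−1}.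 -/
/-!
With `P_k = ∏_{i=1}^k (q^i - 1)`, the series `F(x) = ∑ x^k / P_k` satisfies
`F(x) - F(x/q) = (x/q) F(x/q)`, because `(q^k - 1) / P_k = 1 / P_{k-1}`. Iterating this and
letting `F(x q^{-n}) → F(0) = 1` gives `F(x) = ∏_{i ≥ 1} (1 + x q^{-i})`. At `x = 1`, Euler's
identity `∏ (1 + t^i) · ∏ (1 - t^{2i-1}) = 1` for `t = q⁻¹` (from `(1 + t^i)(1 - t^i) = 1 - t^{2i}`
and the odd/even split of `∏ (1 - t^i)`) turns this into `F(1) = α(q)⁻¹`, and the functional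
equation at `x = q` and `x = q²` gives `F(q) = 2 F(1)` and `F(q²) = (1 + q) F(q)`.
-/

noncomputable section

open Filter Topology Finset
open scoped Nat

section Euler

variable {R : Type*} [NormedField R] {t : R}

theorem summable_norm_mul_pow_comp (ht : ‖t‖ < 1) (c : R) {e : ℕ → ℕ} (he : ∀ i, i ≤ e i) :
    Summable fun i ↦ ‖c * t ^ e i‖ := by
  refine ((summable_geometric_of_lt_one (norm_nonneg t) ht).mul_left ‖c‖).of_nonneg_of_le
    (fun _ ↦ norm_nonneg _) fun i ↦ ?_
  rw [norm_mul, norm_pow]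
  exact mul_le_mul_of_nonneg_left (pow_le_pow_of_le_one (norm_nonneg t) ht.le (he i))
    (norm_nonneg c)

theorem multipliable_one_sub_pow_comp [CompleteSpace R] (ht : ‖t‖ < 1) {e : ℕ → ℕ}
    (he : ∀ i, i ≤ e i) : Multipliable fun i ↦ 1 - t ^ e i := by
  simpa [sub_eq_add_neg] using
    multipliable_one_add_of_summable (summable_norm_mul_pow_comp ht (-1) he)

theorem tprod_one_sub_pow_comp_ne_zero [CompleteSpace R] (ht : ‖t‖ < 1) {e : ℕ → ℕ}
    (he : ∀ i, i < e i) : ∏' i, (1 - t ^ e i) ≠ 0 := by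
  have hlt (i : ℕ) : ‖t ^ e i‖ < 1 := by
    rw [norm_pow]; exact pow_lt_one₀ (norm_nonneg t) ht (by have := he i; omega)
  have := tprod_one_add_ne_zero_of_summable (f := fun i ↦ -1 * t ^ e i)
    (fun i h ↦ by
      have h1 : t ^ e i = 1 := by linear_combination -h
      simpa [h1] using hlt i)
    (summable_norm_mul_pow_comp ht (-1) fun i ↦ (he i).le)
  simpa [sub_eq_add_neg] using this

theorem tprod_one_add_pow_mul_tprod_one_sub_odd_pow [CompleteSpace R] (ht : ‖t‖ < 1) :
    (∏' i : ℕ, (1 + t ^ (i + 1))) * ∏' i : ℕ, (1 - t ^ (2 * i + 1)) = 1 := by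
  have hA : Multipliable fun i : ℕ ↦ 1 + t ^ (i + 1) := by
    simpa using multipliable_one_add_of_summable
      (summable_norm_mul_pow_comp ht 1 (e := (· + 1)) (by omega))
  have hD := multipliable_one_sub_pow_comp ht (e := (· + 1)) (by omega)
  have hO := multipliable_one_sub_pow_comp ht (e := (2 * · + 1)) (by omega)
  have hE := multipliable_one_sub_pow_comp ht (e := (2 * · + 2)) (by omega)
  have hAD : (∏' i : ℕ, (1 + t ^ (i + 1))) * ∏' i : ℕ, (1 - t ^ (i + 1))
      = ∏' i : ℕ, (1 - t ^ (2 * i + 2)) := by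
    rw [← hA.tprod_mul hD]
    exact tprod_congr fun i ↦ by ring
  have hOE : (∏' i : ℕ, (1 - t ^ (2 * i + 1))) * ∏' i : ℕ, (1 - t ^ (2 * i + 2))
      = ∏' i : ℕ, (1 - t ^ (i + 1)) :=
    tprod_even_mul_odd (f := fun k ↦ 1 - t ^ (k + 1)) hO hE
  apply mul_right_cancel₀ (tprod_one_sub_pow_comp_ne_zero ht (e := (2 * · + 2)) (by omega))
  rw [one_mul, mul_assoc, hOE, hAD]

end Euler

def powSubOneProd (q : ℝ) (k : ℕ) : ℝ := ∏ i ∈ range k, (q ^ (i + 1) - 1)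

def qExp (q x : ℝ) : ℝ := ∑' k, x ^ k / powSubOneProd q k

section qExp

variable {q : ℝ}

theorem norm_inv_lt_one_of_one_lt (hq : 1 < q) : ‖q⁻¹‖ < 1 := by
  rw [norm_inv, Real.norm_of_nonneg (by linarith)]
  exact inv_lt_one_of_one_lt₀ hq

theorem powSubOneProd_pos (hq : 1 < q) (k : ℕ) : 0 < powSubOneProd q k :=
  prod_pos fun i _ ↦ sub_pos.2 (one_lt_pow₀ hq i.succ_ne_zero)

theorem sub_one_pow_mul_factorial_le_powSubOneProd (hq : 1 ≤ q) (k : ℕ) :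
    (q - 1) ^ k * k ! ≤ powSubOneProd q k := by
  induction k with
  | zero => simp [powSubOneProd]
  | succ k ih =>
    have hbernoulli : (q - 1) * (k + 1) ≤ q ^ (k + 1) - 1 := by
      have := one_add_mul_sub_le_pow (a := q) (by linarith) (k + 1)
      push_cast at this
      linarith
    calc (q - 1) ^ (k + 1) * ((k + 1 : ℕ) ! : ℝ)
        = (q - 1) ^ k * k ! * ((q - 1) * (k + 1)) := by push_cast [Nat.factorial_succ]; ring
      _ ≤ powSubOneProd q k * (q ^ (k + 1) - 1) :=
          mul_le_mul ih hbernoulli (by have := sub_nonneg.2 hq; positivity)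
            (ih.trans' (by have := sub_nonneg.2 hq; positivity))
      _ = powSubOneProd q (k + 1) := (prod_range_succ _ _).symm

theorem summable_qExp (hq : 1 < q) (x : ℝ) : Summable fun k ↦ x ^ k / powSubOneProd q k := by
  refine (Real.summable_pow_div_factorial (|x| / (q - 1))).of_norm_bounded fun k ↦ ?_
  rw [norm_div, norm_pow, Real.norm_eq_abs, Real.norm_of_nonneg (powSubOneProd_pos hq k).le,
    div_pow, div_div]
  exact div_le_div_of_nonneg_left (by positivity) (by positivity)
    (sub_one_pow_mul_factorial_le_powSubOneProd hq.le k)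

theorem qExp_sub_qExp_div (hq : 1 < q) (x : ℝ) :
    qExp q x - qExp q (x / q) = x / q * qExp q (x / q) := by
  have hs := (summable_qExp hq x).sub (summable_qExp hq (x / q))
  rw [qExp, qExp, ← (summable_qExp hq x).tsum_sub (summable_qExp hq (x / q)),
    hs.tsum_eq_zero_add, ← tsum_mul_left]
  simp only [pow_zero, sub_self, zero_add]
  refine tsum_congr fun k ↦ ?_
  have hP := (powSubOneProd_pos hq k).ne'
  have hq0 : q ≠ 0 := by positivity
  have hd : q ^ (k + 1) - 1 ≠ 0 := (sub_pos.2 (one_lt_pow₀ hq k.succ_ne_zero)).ne'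
  rw [powSubOneProd, prod_range_succ, ← powSubOneProd, div_pow, div_pow]
  field_simp
  ring

theorem qExp_eq_one_add_div_mul (hq : 1 < q) (x : ℝ) :
    qExp q x = (1 + x / q) * qExp q (x / q) := by
  linear_combination qExp_sub_qExp_div hq x

theorem tendsto_qExp_nhds_zero (hq : 1 < q) : Tendsto (qExp q) (𝓝 0) (𝓝 1) := by
  have hP := powSubOneProd_pos hq
  have h0 : ∑' k, (0 : ℝ) ^ k / powSubOneProd q k = 1 := by
    rw [tsum_eq_single 0 fun k hk ↦ by simp [hk]]
    simp [powSubOneProd]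
  rw [← h0]
  refine tendsto_tsum_of_dominated_convergence (bound := fun k ↦ 1 / powSubOneProd q k)
    (by simpa using summable_qExp hq 1)
    (fun k ↦ ((continuous_pow k).div_const _).tendsto 0) ?_
  filter_upwards [Icc_mem_nhds (neg_one_lt_zero : (-1 : ℝ) < 0) one_pos] with x hx k
  rw [norm_div, norm_pow, Real.norm_of_nonneg (hP k).le]
  refine div_le_div_of_nonneg_right ?_ (hP k).le
  exact pow_le_one₀ (norm_nonneg x) (abs_le.2 hx)

theorem qExp_eq_prod_mul (hq : 1 < q) (x : ℝ) (n : ℕ) :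
    qExp q x = (∏ i ∈ range n, (1 + x * q⁻¹ ^ (i + 1))) * qExp q (x * q⁻¹ ^ n) := by
  induction n with
  | zero => simp
  | succ n ih =>
    have hdiv : x * q⁻¹ ^ n / q = x * q⁻¹ ^ (n + 1) := by ring
    rw [ih, qExp_eq_one_add_div_mul hq (x * q⁻¹ ^ n), hdiv, prod_range_succ]
    ring

theorem qExp_eq_tprod (hq : 1 < q) (x : ℝ) : qExp q x = ∏' i, (1 + x * q⁻¹ ^ (i + 1)) := by
  have ht := norm_inv_lt_one_of_one_lt hq
  have hprod := (multipliable_one_add_of_summable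
    (summable_norm_mul_pow_comp ht x (e := (· + 1)) (by omega))).hasProd.tendsto_prod_nat
  have hexp : Tendsto (fun n ↦ qExp q (x * q⁻¹ ^ n)) atTop (𝓝 1) := by
    refine (tendsto_qExp_nhds_zero hq).comp ?_
    simpa using (tendsto_pow_atTop_nhds_zero_of_norm_lt_one ht).const_mul x
  exact tendsto_nhds_unique (tendsto_const_nhds.congr (qExp_eq_prod_mul hq x))
    (by simpa using hprod.mul hexp)

end qExp

theorem tsum_piSym_mul_pow (q : ℝ) (m : ℕ) :
    ∑' k, piSym q k * (q ^ m) ^ k = alphaQ q * qExp q (q ^ m) := by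
  rw [qExp, ← tsum_mul_left]
  exact tsum_congr fun k ↦ by rw [piSym, powSubOneProd]; ring

/-- Moment identities for `π_sym`: `Σ_k π_sym(k) = 1`,
`Σ_k π_sym(k)·q^k = 2`, `Σ_k π_sym(k)·q^{2k} = 2 + 2q`; equivalently
`Σ_k 1/∏_{i=1}^{k}(q^i−1) = α(q)⁻¹`, `Σ_k q^k/∏_{i=1}^{k}(q^i−1) = 2α(q)⁻¹`,
`Σ_k q^{2k}/∏_{i=1}^{k}(q^i−1) = (2+2q)·α(q)⁻¹`. -/
theorem stmt18 (q : ℝ) (hq : 1 < q) :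
    (∑' k : ℕ, piSym q k) = 1 ∧
    (∑' k : ℕ, piSym q k * q ^ k) = 2 ∧
    (∑' k : ℕ, piSym q k * q ^ (2 * k)) = 2 + 2 * q ∧
    (∑' k : ℕ, 1 / ∏ i ∈ Finset.range k, (q ^ (i + 1) - 1)) = (alphaQ q)⁻¹ ∧
    (∑' k : ℕ, q ^ k / ∏ i ∈ Finset.range k, (q ^ (i + 1) - 1)) = 2 * (alphaQ q)⁻¹ ∧
    (∑' k : ℕ, q ^ (2 * k) / ∏ i ∈ Finset.range k, (q ^ (i + 1) - 1))
      = (2 + 2 * q) * (alphaQ q)⁻¹ := by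
  have hα : qExp q 1 * alphaQ q = 1 := by
    rw [qExp_eq_tprod hq 1, alphaQ]
    simpa using tprod_one_add_pow_mul_tprod_one_sub_odd_pow (norm_inv_lt_one_of_one_lt hq)
  have hF_q : qExp q q = 2 * qExp q 1 := by
    rw [qExp_eq_one_add_div_mul hq q, div_self (by positivity)]; norm_num
  have hF_sq : qExp q (q ^ 2) = (2 + 2 * q) * qExp q 1 := by
    rw [qExp_eq_one_add_div_mul hq, pow_two, mul_div_cancel_right₀ _ (by positivity), hF_q]; ring
  have hinv : qExp q 1 = (alphaQ q)⁻¹ := eq_inv_of_mul_eq_one_left hα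
  have h0 := tsum_piSym_mul_pow q 0
  have h1 := tsum_piSym_mul_pow q 1
  have h2 := tsum_piSym_mul_pow q 2
  simp only [pow_zero, one_pow, mul_one, pow_one, ← pow_mul] at h0 h1 h2
  refine ⟨?_, ?_, ?_, ?_, ?_, ?_⟩
  · linear_combination h0 + hα
  · linear_combination h1 + alphaQ q * hF_q + 2 * hα
  · linear_combination h2 + alphaQ q * hF_sq + (2 + 2 * q) * hα
  · simpa [qExp, powSubOneProd] using hinv
  · rw [← hinv, ← hF_q]; rfl
  · rw [← hinv, ← hF_sq, qExp]; simp only [powSubOneProd, pow_mul]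
end
end
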